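/- arXiv:1711.03001 — 7 statements merged into one kernel-verified Lean document; each statement's English description precedes it below -/
import Mathlib

section
/- For integers d ≥ 0 and -1 ≤ i,j ≤ d, the Eulerian-type numbers h^{(d)}_{i,j} = A(d+2, i+1, j+2) satisfy the recurrence h^{(d)}_{i,j} = Σ_{ℓ=-1}^{j-1} h^{(d-1)}_{i-1,ℓ} + Σ_{ℓ=j}^{d-1} h^{(d-1)}_{i,ℓ}. -/
/-- The number of descents of a permutation of `Fin m` (positions `i` with
`σ(i) > σ(i+1)`), counted via consecutive pairs. -/
def des {m : ℕ} (σ : Equiv.Perm (Fin m)) : ℕ :=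
  (Finset.univ.filter fun p : Fin m × Fin m =>
    (p.1 : ℕ) + 1 = (p.2 : ℕ) ∧ σ p.2 < σ p.1).card

/-- `Anum m i1 j = A(m, i1 - 1, j)`: the number of permutations `σ` of `[m] = {1,…,m}`
(modelled as `Fin m`, value `v` standing for `v+1`) with `des σ = i1 - 1`
(encoded as `des σ + 1 = i1`, so `Anum m 0 j = A(m,-1,j) = 0`) and `σ(1) = j`. -/
def Anum (m i1 j : ℕ) : ℕ :=
  (Finset.univ.filter fun σ : Equiv.Perm (Fin m) =>
    des σ + 1 = i1 ∧ ∃ h : 0 < m, ((σ ⟨0, h⟩ : ℕ) + 1 = j)).card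

/-- `h^{(d)}_{i,j} = A(d+2, i+1, j+2)` for integers `i, j` (zero when `i+1 ≤ -1`). -/
def hnum (d i j : ℤ) : ℕ :=
  Anum (d + 2).toNat (i + 2).toNat (j + 2).toNat

open Finset Equiv

lemma des_eq_sum {m : ℕ} (σ : Equiv.Perm (Fin m)) :
    des σ = ∑ k : Fin m, if h : (k : ℕ) + 1 < m then (if σ ⟨(k : ℕ) + 1, h⟩ < σ k then 1 else 0) else 0 := by
  rw [des, Finset.card_filter, Fintype.sum_prod_type]
  refine Finset.sum_congr rfl fun k _ => ?_
  by_cases h : (k : ℕ) + 1 < m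
  · rw [dif_pos h]
    have : ∀ p2 : Fin m, ((k : ℕ) + 1 = (p2 : ℕ) ∧ σ p2 < σ k) ↔ (p2 = ⟨(k:ℕ)+1, h⟩ ∧ σ p2 < σ k) := by
      intro p2; rw [Fin.ext_iff]; simp [eq_comm]
    simp_rw [this]
    rw [Fintype.sum_eq_single (⟨(k:ℕ)+1, h⟩ : Fin m)]
    · simp
    · intro x hx; simp [hx]
  · rw [dif_neg h]
    apply Finset.sum_eq_zero
    intro p2 _
    have : ¬((k : ℕ) + 1 = (p2 : ℕ) ∧ σ p2 < σ k) := by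
      rintro ⟨h1, -⟩; exact h (h1 ▸ p2.isLt)
    exact if_neg this

noncomputable def extPerm {n : ℕ} (a : Fin (n + 1)) (τ : Equiv.Perm (Fin n)) : Equiv.Perm (Fin (n + 1)) :=
  Equiv.ofBijective (fun x => Fin.cases a (fun k => a.succAbove (τ k)) x)
    (Finite.injective_iff_bijective.mp (by
      intro x y hxy
      induction x using Fin.cases with
      | zero =>
        induction y using Fin.cases with
        | zero => rfl
        | succ y => exact absurd hxy.symm (Fin.succAbove_ne a (τ y))
      | succ x =>
        induction y using Fin.cases with
        | zero => exact absurd hxy (Fin.succAbove_ne a (τ x))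
        | succ y =>
          simp only [Fin.cases_succ] at hxy
          rw [τ.injective (Fin.succAbove_right_injective hxy)]))

@[simp] lemma extPerm_zero {n : ℕ} (a : Fin (n + 1)) (τ : Equiv.Perm (Fin n)) :
    extPerm a τ 0 = a := rfl

@[simp] lemma extPerm_succ {n : ℕ} (a : Fin (n + 1)) (τ : Equiv.Perm (Fin n)) (k : Fin n) :
    extPerm a τ k.succ = a.succAbove (τ k) := rfl

lemma des_extPerm {n : ℕ} (a : Fin (n + 2)) (τ : Equiv.Perm (Fin (n + 1))) :
    des (extPerm a τ) = des τ + (if (τ 0 : ℕ) < (a : ℕ) then 1 else 0) := by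
  rw [des_eq_sum, des_eq_sum, Fin.sum_univ_succ]
  have h0 : (0 : Fin (n+2)).val + 1 < n + 2 := by simp
  rw [dif_pos h0]
  have e0 : (⟨(0 : Fin (n+2)).val + 1, h0⟩ : Fin (n+2)) = Fin.succ 0 := rfl
  rw [e0, extPerm_succ, extPerm_zero]
  have hc : (a.succAbove (τ 0) < a) ↔ ((τ 0 : ℕ) < (a : ℕ)) := by
    rw [Fin.succAbove_lt_iff_castSucc_lt, Fin.lt_def, Fin.coe_castSucc]
  have hI : (if a.succAbove (τ 0) < a then (1:ℕ) else 0) = (if (τ 0 : ℕ) < (a : ℕ) then 1 else 0) :=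
    if_congr hc rfl rfl
  rw [hI, add_comm]
  congr 1
  refine Finset.sum_congr rfl fun k _ => ?_
  by_cases h : (k : ℕ) + 1 < n + 1
  · have h' : (k.succ : ℕ) + 1 < n + 2 := by simpa using Nat.succ_lt_succ h
    rw [dif_pos h', dif_pos h]
    have e1 : (⟨(k.succ : ℕ) + 1, h'⟩ : Fin (n+2)) = Fin.succ ⟨(k : ℕ) + 1, h⟩ := rfl
    rw [e1, extPerm_succ, extPerm_succ]
    exact if_congr Fin.succAbove_lt_succAbove_iff rfl rfl
  · have h' : ¬ ((k.succ : ℕ) + 1 < n + 2) := by simp; omega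
    rw [dif_neg h', dif_neg h]

lemma count_step (n : ℕ) (a : Fin (n + 2)) (i1 : ℕ) :
    (Finset.univ.filter fun σ : Equiv.Perm (Fin (n + 2)) => des σ + 1 = i1 ∧ σ 0 = a).card
      = ∑ b : Fin (n + 1), (Finset.univ.filter fun τ : Equiv.Perm (Fin (n + 1)) =>
          des τ + 1 + (if (b : ℕ) < (a : ℕ) then 1 else 0) = i1 ∧ τ 0 = b).card := by
  classical
  have step1 : (Finset.univ.filter fun τ : Equiv.Perm (Fin (n + 1)) =>
      des τ + 1 + (if ((τ 0 : ℕ)) < (a : ℕ) then 1 else 0) = i1).card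
      = ∑ b : Fin (n + 1), (Finset.univ.filter fun τ : Equiv.Perm (Fin (n + 1)) =>
          des τ + 1 + (if (b : ℕ) < (a : ℕ) then 1 else 0) = i1 ∧ τ 0 = b).card := by
    rw [Finset.card_eq_sum_card_fiberwise (f := fun τ => τ 0) (t := Finset.univ)
      (fun τ _ => Finset.mem_univ _)]
    refine Finset.sum_congr rfl fun b _ => ?_
    congr 1
    ext τ
    simp only [Finset.mem_filter, Finset.mem_univ, true_and, Finset.filter_filter]
    constructor
    · rintro ⟨h1, h2⟩; subst h2; exact ⟨h1, rfl⟩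
    · rintro ⟨h1, h2⟩; subst h2; exact ⟨h1, rfl⟩
  rw [← step1]
  refine (Finset.card_bij (fun τ _ => extPerm a τ) ?_ ?_ ?_).symm
  · intro τ hτ
    simp only [Finset.mem_filter, Finset.mem_univ, true_and] at hτ ⊢
    refine ⟨?_, rfl⟩
    rw [des_extPerm]
    omega
  · intro τ1 h1 τ2 h2 heq
    ext k
    have := congrArg (fun σ : Equiv.Perm (Fin (n+2)) => σ k.succ) heq
    simp only [extPerm_succ] at this
    exact congrArg Fin.val (Fin.succAbove_right_injective this)
  · intro σ hσ
    simp only [Finset.mem_filter, Finset.mem_univ, true_and] at hσ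
    obtain ⟨hdes, h0⟩ := hσ
    have hne : ∀ k : Fin (n + 1), σ k.succ ≠ a := by
      intro k hk
      rw [← h0] at hk
      exact Fin.succ_ne_zero k (σ.injective hk)
    choose f hf using fun k => Fin.exists_succAbove_eq (hne k)
    have hfinj : Function.Injective f := by
      intro x y hxy
      have : σ x.succ = σ y.succ := by rw [← hf x, ← hf y, hxy]
      exact Fin.succ_injective _ (σ.injective this)
    let τ : Equiv.Perm (Fin (n + 1)) := Equiv.ofBijective f (Finite.injective_iff_bijective.mp hfinj)
    have hext : extPerm a τ = σ := by
      ext x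
      induction x using Fin.cases with
      | zero => rw [extPerm_zero, h0]
      | succ k => rw [extPerm_succ]; exact congrArg Fin.val (hf k)
    refine ⟨τ, ?_, hext⟩
    simp only [Finset.mem_filter, Finset.mem_univ, true_and]
    have := des_extPerm a τ
    rw [hext] at this
    omega

lemma anum_step (n c i1 : ℕ) (hc : c ≤ n + 1) (hi1 : 1 ≤ i1) :
    Anum (n + 2) i1 (c + 1)
      = (∑ b ∈ Finset.range c, Anum (n + 1) (i1 - 1) (b + 1))
        + ∑ b ∈ Finset.Ico c (n + 1), Anum (n + 1) i1 (b + 1) := by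
  classical
  have ha : c < n + 2 := by omega
  set a : Fin (n + 2) := ⟨c, ha⟩ with ha'
  have h1 : Anum (n + 2) i1 (c + 1)
      = (Finset.univ.filter fun σ : Equiv.Perm (Fin (n + 2)) => des σ + 1 = i1 ∧ σ 0 = a).card := by
    rw [Anum]
    apply congrArg Finset.card
    have hae : (a : ℕ) = c := rfl
    ext σ
    simp only [Finset.mem_filter, Finset.mem_univ, true_and, and_congr_right_iff]
    intro _
    constructor
    · rintro ⟨h, hv⟩
      have h0 : (⟨0, h⟩ : Fin (n+2)) = 0 := rfl
      rw [h0] at hv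
      exact Fin.ext (by omega)
      
    · intro hv
      have hv' : (σ 0 : ℕ) + 1 = c + 1 := by rw [hv]
      exact ⟨by omega, by rw [show (⟨0, by omega⟩ : Fin (n+2)) = 0 from rfl, hv']⟩
  have h2 : ∀ b : Fin (n + 1),
      (Finset.univ.filter fun τ : Equiv.Perm (Fin (n + 1)) =>
          des τ + 1 + (if (b : ℕ) < (a : ℕ) then 1 else 0) = i1 ∧ τ 0 = b).card
      = if (b : ℕ) < c then Anum (n + 1) (i1 - 1) ((b : ℕ) + 1) else Anum (n + 1) i1 ((b : ℕ) + 1) := by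
    intro b
    have hae : (a : ℕ) = c := rfl
    by_cases hb : (b : ℕ) < c
    · rw [if_pos hb, if_pos hb, Anum]
      apply congrArg Finset.card
      ext τ
      simp only [Finset.mem_filter, Finset.mem_univ, true_and, hae, if_pos hb]
      constructor
      · rintro ⟨he, hv⟩
        exact ⟨by omega, by omega, by rw [show (⟨0, by omega⟩ : Fin (n+1)) = 0 from rfl, hv]⟩
      · rintro ⟨he, h, hv⟩
        rw [show (⟨0, h⟩ : Fin (n+1)) = 0 from rfl] at hv
        exact ⟨by omega, Fin.ext (by omega)⟩
    · rw [if_neg hb, if_neg hb, Anum]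
      apply congrArg Finset.card
      ext τ
      simp only [Finset.mem_filter, Finset.mem_univ, true_and, hae, if_neg hb]
      constructor
      · rintro ⟨he, hv⟩
        exact ⟨by omega, by omega, by rw [show (⟨0, by omega⟩ : Fin (n+1)) = 0 from rfl, hv]⟩
      · rintro ⟨he, h, hv⟩
        rw [show (⟨0, h⟩ : Fin (n+1)) = 0 from rfl] at hv
        exact ⟨by omega, Fin.ext (by omega)⟩
  rw [h1, count_step]
  simp_rw [h2]
  rw [Fin.sum_univ_eq_sum_range (fun b => if b < c then Anum (n + 1) (i1 - 1) (b + 1) else Anum (n + 1) i1 (b + 1))]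
  rw [Finset.range_eq_Ico, ← Finset.sum_Ico_consecutive _ (Nat.zero_le c) hc]
  congr 1
  · rw [← Finset.range_eq_Ico]
    exact Finset.sum_congr rfl fun b hb => if_pos (Finset.mem_range.mp hb)
  · exact Finset.sum_congr rfl fun b hb => if_neg (by have := (Finset.mem_Ico.mp hb).1; omega)

lemma sum_Icc_reindex (lo hi : ℤ) (hlo : -1 ≤ lo) (g : ℕ → ℕ) :
    ∑ l ∈ Finset.Icc lo hi, g ((l + 1).toNat) = ∑ b ∈ Finset.Ico (lo + 1).toNat (hi + 2).toNat, g b := by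
  refine Finset.sum_nbij' (fun l => (l + 1).toNat) (fun b => (b : ℤ) - 1) ?_ ?_ ?_ ?_ ?_
  · intro l hl
    rw [Finset.mem_Icc] at hl
    rw [Finset.mem_Ico]
    omega
  · intro b hb
    rw [Finset.mem_Ico] at hb
    rw [Finset.mem_Icc]
    omega
  · intro l hl
    rw [Finset.mem_Icc] at hl
    omega
  · intro b hb
    rw [Finset.mem_Ico] at hb
    omega
  · intro l _
    rfl

/-- For `d ≥ 0` and `-1 ≤ i,j ≤ d`:
`h^{(d)}_{i,j} = Σ_{ℓ=-1}^{j-1} h^{(d-1)}_{i-1,ℓ} + Σ_{ℓ=j}^{d-1} h^{(d-1)}_{i,ℓ}`. -/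
theorem stmt6 (d : ℕ) (i j : ℤ) (hi : -1 ≤ i) (hi' : i ≤ d) (hj : -1 ≤ j) (hj' : j ≤ d) :
    hnum d i j
      = (∑ l ∈ Finset.Icc (-1 : ℤ) (j - 1), hnum (d - 1) (i - 1) l)
        + ∑ l ∈ Finset.Icc j ((d : ℤ) - 1), hnum (d - 1) i l := by
  have hc : (j + 1).toNat ≤ d + 1 := by omega
  have hi1 : 1 ≤ (i + 2).toNat := by omega
  have e1 : hnum d i j = Anum (d + 2) (i + 2).toNat ((j + 1).toNat + 1) := by
    rw [hnum, show ((d : ℤ) + 2).toNat = d + 2 by omega, show (j + 2).toNat = (j + 1).toNat + 1 by omega]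
  rw [e1, anum_step d (j + 1).toNat (i + 2).toNat hc hi1]
  congr 1
  · have h2 : ∑ l ∈ Finset.Icc (-1 : ℤ) (j - 1), hnum ((d : ℤ) - 1) (i - 1) l
        = ∑ l ∈ Finset.Icc (-1 : ℤ) (j - 1),
            (fun b => Anum (d + 1) ((i + 2).toNat - 1) (b + 1)) ((l + 1).toNat) := by
      refine Finset.sum_congr rfl fun l hl => ?_
      rw [Finset.mem_Icc] at hl
      rw [hnum, show ((d : ℤ) - 1 + 2).toNat = d + 1 by omega,
        show ((i : ℤ) - 1 + 2).toNat = (i + 2).toNat - 1 by omega,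
        show ((l : ℤ) + 2).toNat = (l + 1).toNat + 1 by omega]
    rw [h2, sum_Icc_reindex (-1) (j - 1) (by norm_num) (fun b => Anum (d + 1) ((i + 2).toNat - 1) (b + 1))]
    rw [show ((-1 : ℤ) + 1).toNat = 0 by norm_num, show ((j - 1) + 2).toNat = (j + 1).toNat by omega,
      Finset.range_eq_Ico]
  · have h2 : ∑ l ∈ Finset.Icc j ((d : ℤ) - 1), hnum ((d : ℤ) - 1) i l
        = ∑ l ∈ Finset.Icc j ((d : ℤ) - 1),
            (fun b => Anum (d + 1) (i + 2).toNat (b + 1)) ((l + 1).toNat) := by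
      refine Finset.sum_congr rfl fun l hl => ?_
      rw [Finset.mem_Icc] at hl
      rw [hnum, show ((d : ℤ) - 1 + 2).toNat = d + 1 by omega,
        show ((l : ℤ) + 2).toNat = (l + 1).toNat + 1 by omega]
    rw [h2, sum_Icc_reindex j ((d : ℤ) - 1) hj (fun b => Anum (d + 1) (i + 2).toNat (b + 1))]
    rw [show ((d : ℤ) - 1 + 2).toNat = d + 1 by omega]
end

section
/- Let M be an n×n real matrix with negative diagonal entries -A_j (A_j > 0), positive off-diagonal entries a_{i,j}, satisfying strict column diagonal dominance Σ_{i≠j} a_{i,j} < A_j for all j. If M_j is the matrix obtained from M by replacing its j-th column with (-b_1, ..., -b_n)^t where all b_i > 0, then sign(det(M_j)) = (-1)^n. -/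
open Finset

lemma aux_det_ne_zero {n : ℕ} (j₀ : Fin n) (C : Matrix (Fin n) (Fin n) ℝ)
    (h1 : ∀ j, j ≠ j₀ → 0 < C j j)
    (h2 : ∀ i j, j ≠ j₀ → i ≠ j → C i j ≤ 0)
    (h3 : ∀ j, j ≠ j₀ → ∑ i ∈ Finset.univ.erase j, -(C i j) < C j j)
    (h4 : ∀ i, 0 ≤ C i j₀)
    (h5 : 0 < C j₀ j₀) :
    C.det ≠ 0 := by
  intro hdet
  obtain ⟨v, hv0, hv⟩ := Matrix.exists_mulVec_eq_zero_iff.mpr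
    (show C.transpose.det = 0 by rwa [Matrix.det_transpose])
  have hveq : ∀ k, ∑ j, C j k * v j = 0 := by
    intro k
    have := congrFun hv k
    simpa [Matrix.mulVec, dotProduct, Matrix.transpose_apply] using this
  have hne : (Finset.univ : Finset (Fin n)).Nonempty := ⟨j₀, Finset.mem_univ _⟩
  -- column equation rearranged
  have hcol : ∀ (u : Fin n → ℝ) (k : Fin n), (∑ j, C j k * u j = 0) →
      C k k * u k = ∑ j ∈ Finset.univ.erase k, -(C j k * u j) := by
    intro u k h
    rw [← Finset.add_sum_erase _ _ (Finset.mem_univ k)] at h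
    rw [Finset.sum_neg_distrib]
    linarith
  -- main claim: no left-null vector with positive j₀ entry
  have main : ∀ u : Fin n → ℝ, (∀ k, ∑ j, C j k * u j = 0) → 0 < u j₀ → False := by
    intro u hu hupos
    set m := Finset.univ.inf' hne u with hm
    have hmle : ∀ j, m ≤ u j := fun j => Finset.inf'_le _ (Finset.mem_univ _)
    by_cases hm0 : 0 ≤ m
    · have hterm : ∀ j ∈ Finset.univ, 0 ≤ C j j₀ * u j := fun j _ =>
        mul_nonneg (h4 j) (hm0.trans (hmle j))
      have hle := Finset.single_le_sum hterm (Finset.mem_univ j₀)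
      rw [hu j₀] at hle
      exact absurd hle (not_le.mpr (mul_pos h5 hupos))
    · push_neg at hm0
      obtain ⟨k₁, -, hk₁⟩ := Finset.exists_mem_eq_inf' hne u
      have hmk : u k₁ = m := by rw [hm, hk₁]
      have hk₁j₀ : k₁ ≠ j₀ := by
        intro h
        rw [h] at hmk
        linarith
      have heq := hcol u k₁ (hu k₁)
      have hbound : ∀ j ∈ Finset.univ.erase k₁, -(C j k₁) * m ≤ -(C j k₁ * u j) := by
        intro j hj
        have := mul_le_mul_of_nonneg_left (hmle j)
          (neg_nonneg.mpr (h2 j k₁ hk₁j₀ (Finset.ne_of_mem_erase hj)))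
        linarith [this]
      have hsum : (∑ j ∈ Finset.univ.erase k₁, -(C j k₁)) * m ≤ C k₁ k₁ * u k₁ := by
        rw [heq, Finset.sum_mul]
        exact Finset.sum_le_sum hbound
      have hlt : C k₁ k₁ * m < (∑ j ∈ Finset.univ.erase k₁, -(C j k₁)) * m :=
        mul_lt_mul_of_neg_right (h3 k₁ hk₁j₀) hm0
      rw [hmk] at hsum
      linarith
  -- v j₀ ≠ 0 via max-modulus argument
  set mx := Finset.univ.sup' hne (fun j => |v j|) with hmx
  have hmxle : ∀ j, |v j| ≤ mx := fun j => Finset.le_sup' (fun j => |v j|) (Finset.mem_univ j)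
  have hmxpos : 0 < mx := by
    obtain ⟨j, hj⟩ := Function.ne_iff.mp hv0
    exact lt_of_lt_of_le (abs_pos.mpr hj) (hmxle j)
  have hltmx : ∀ k, k ≠ j₀ → |v k| < mx := by
    intro k hk
    have h1' := h1 k hk
    have heq := hcol v k (hveq k)
    have habs : C k k * |v k| < C k k * mx := by
      have e1 : C k k * |v k| = |∑ j ∈ Finset.univ.erase k, -(C j k * v j)| := by
        rw [← heq, abs_mul, abs_of_pos h1']
      have e2 : |∑ j ∈ Finset.univ.erase k, -(C j k * v j)| ≤
          ∑ j ∈ Finset.univ.erase k, -(C j k) * mx := by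
        refine (Finset.abs_sum_le_sum_abs _ _).trans (Finset.sum_le_sum ?_)
        intro j hj
        have hC := h2 j k hk (Finset.ne_of_mem_erase hj)
        rw [abs_neg, abs_mul, abs_of_nonpos hC]
        exact mul_le_mul_of_nonneg_left (hmxle j) (neg_nonneg.mpr hC)
      have e3 : ∑ j ∈ Finset.univ.erase k, -(C j k) * mx < C k k * mx := by
        rw [← Finset.sum_mul]
        exact mul_lt_mul_of_pos_right (h3 k hk) hmxpos
      calc C k k * |v k| ≤ ∑ j ∈ Finset.univ.erase k, -(C j k) * mx := e1 ▸ e2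
        _ < C k k * mx := e3
    exact lt_of_mul_lt_mul_left habs h1'.le
  have hvj₀ : v j₀ ≠ 0 := by
    obtain ⟨k₀, -, hk₀⟩ := Finset.exists_mem_eq_sup' hne (fun j => |v j|)
    by_cases h : k₀ = j₀
    · intro h0
      rw [h, h0] at hk₀
      simp only [abs_zero] at hk₀
      rw [hmx, hk₀] at hmxpos
      exact lt_irrefl _ hmxpos
    · have := hltmx k₀ h
      rw [hmx, hk₀] at this
      exact absurd this (lt_irrefl _)
  rcases hvj₀.lt_or_gt with hneg | hpos
  · refine main (fun j => -(v j)) ?_ (by simpa using hneg)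
    intro k
    have := hveq k
    simp only [mul_neg]
    rw [Finset.sum_neg_distrib, this, neg_zero]
  · exact main v hveq hpos

/-- Let `M` be an `n×n` real matrix with negative diagonal, positive off-diagonal entries
and strict column diagonal dominance. If `M_j` is obtained from `M` by replacing the
`j₀`-th column by `(-b_1, …, -b_n)ᵗ` with all `b_i > 0`, then `sign(det M_j) = (-1)^n`. -/
theorem stmt11 (n : ℕ) (M : Matrix (Fin n) (Fin n) ℝ)
    (hdiag : ∀ j, M j j < 0)
    (hoff : ∀ i j, i ≠ j → 0 < M i j)
    (hdom : ∀ j, ∑ i ∈ Finset.univ.erase j, M i j < -(M j j))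
    (j₀ : Fin n) (b : Fin n → ℝ) (hb : ∀ i, 0 < b i) :
    0 < (-1 : ℝ) ^ n *
      (Matrix.of fun i j => if j = j₀ then -(b i) else M i j).det := by
  set N : Matrix (Fin n) (Fin n) ℝ := Matrix.of fun i j => if j = j₀ then b i else -(M i j)
    with hN
  have hMj : (Matrix.of fun i j => if j = j₀ then -(b i) else M i j) = -N := by
    ext i j
    by_cases h : j = j₀ <;> simp [hN, h]
  rw [hMj, Matrix.det_neg, Fintype.card_fin]
  have hpow : (-1 : ℝ) ^ n * ((-1 : ℝ) ^ n * N.det) = N.det := by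
    rw [← mul_assoc, ← pow_add]
    rw [Even.neg_one_pow ⟨n, rfl⟩, one_mul]
  rw [hpow]
  -- homotopy
  set A : ℝ → Matrix (Fin n) (Fin n) ℝ := fun t => (1 - t) • (1 : Matrix (Fin n) (Fin n) ℝ) + t • N
    with hA
  have hAapp : ∀ t i j, A t i j = (1 - t) * (if i = j then 1 else 0) + t * N i j := by
    intro t i j
    simp [hA, Matrix.add_apply, Matrix.smul_apply, Matrix.one_apply, smul_eq_mul]
  have hnz : ∀ t ∈ Set.Icc (0 : ℝ) 1, (A t).det ≠ 0 := by
    intro t ht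
    have ht0 := ht.1
    have ht1 := ht.2
    apply aux_det_ne_zero j₀
    · intro j hj
      rw [hAapp]
      simp only [if_pos rfl, hN, Matrix.of_apply, if_neg hj, eq_self_iff_true, if_true]
      nlinarith [hdiag j, mul_nonneg ht0 (neg_nonneg.mpr (hdiag j).le)]
    · intro i j hj hij
      rw [hAapp]
      simp only [if_neg hij, hN, Matrix.of_apply, if_neg hj]
      nlinarith [hoff i j hij]
    · intro j hj
      have hsum : ∑ i ∈ Finset.univ.erase j, -(A t i j) = t * ∑ i ∈ Finset.univ.erase j, M i j := by
        rw [Finset.mul_sum]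
        refine Finset.sum_congr rfl ?_
        intro i hi
        rw [hAapp]
        simp only [if_neg (Finset.ne_of_mem_erase hi), hN, Matrix.of_apply, if_neg hj]
        ring
      rw [hsum, hAapp]
      simp only [if_pos rfl, hN, Matrix.of_apply, if_neg hj, eq_self_iff_true, if_true]
      have hd := hdom j
      rcases ht0.eq_or_lt with h | h
      · rw [← h]; norm_num
      · nlinarith [mul_lt_mul_of_pos_left hd h]
    · intro i
      rw [hAapp]
      simp only [hN, Matrix.of_apply, if_pos rfl, eq_self_iff_true, if_true]
      have : (0:ℝ) ≤ (1 - t) * (if i = j₀ then 1 else 0) := by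
        by_cases h : i = j₀ <;> simp [h] <;> linarith
      nlinarith [hb i, this]
    · rw [hAapp]
      simp only [if_pos rfl, hN, Matrix.of_apply, eq_self_iff_true, if_true]
      nlinarith [hb j₀, mul_nonneg ht0 (hb j₀).le]
  have hcont : Continuous fun t => (A t).det := by
    apply Continuous.matrix_det
    fun_prop
  have hA0 : (A 0).det = 1 := by simp [hA]
  have hA1 : (A 1).det = N.det := by simp [hA]
  by_contra hcon
  push_neg at hcon
  have hlt : (A 1).det < 0 := by
    rcases lt_or_eq_of_le (hA1 ▸ hcon) with h | h
    · exact h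
    · exact absurd h (hnz 1 ⟨zero_le_one, le_refl 1⟩)
  have hmem : (0:ℝ) ∈ Set.Icc ((fun t => (A t).det) 1) ((fun t => (A t).det) 0) := by
    simp only [hA0]
    exact ⟨hlt.le, zero_le_one⟩
  obtain ⟨t, htmem, htval⟩ := intermediate_value_Icc' zero_le_one hcont.continuousOn hmem
  exact hnz t htmem htval
end

section
/- For all integers d ≥ 0 and 0 ≤ j ≤ d, the number of permutations σ of {1, ..., d+2} with exactly one descent and σ(1) = j+2 equals 2^{d-j}; that is, h^{(d)}_{0,j} = A(d+2, 1, j+2) = 2^{d-j}. -/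
/-!
A permutation with exactly one descent increases before and after it. If it does not start
with `0`, the value `0` must sit right after the descent, so the permutation is the shuffle of
the set `S` of values preceding `0` with its complement; conversely, such a shuffle with
`0 ∉ S ≠ ∅` has exactly one descent. Its first value is `min S`, so fixing it to be `a` leaves
`S = {a} ∪ T` with `T` an arbitrary subset of `(a, n]`, whence `2 ^ (n - a)` permutations.
-/

open Finset Equiv

lemma strictMonoOn_of_covBy {α β : Type*} [PartialOrder α] [SuccOrder α] [IsSuccArchimedean α]
    [Preorder β] {f : α → β} {s : Set α} (hs : s.OrdConnected)
    (hf : ∀ a b, a ⋖ b → a ∈ s → b ∈ s → f a < f b) : StrictMonoOn f s :=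
  strictMonoOn_of_lt_succ hs fun a ha has hsa => hf a _ (Order.covBy_succ_of_not_isMax ha) has hsa

section Shuffle

variable {m : ℕ} (s : Finset (Fin m))

lemma card_add_card_compl_fin : #s + #sᶜ = m := by
  simp [card_add_card_compl]

/-- In one-line notation: the elements of `s` in increasing order, then those of `sᶜ`. -/
noncomputable def shuffle : Perm (Fin m) :=
  (finCongr (card_add_card_compl_fin s).symm).trans
    (finSumFinEquiv.symm.trans (finSumEquivOfFinset rfl rfl))

variable {s}

lemma shuffle_apply_of_lt {i : Fin m} (hi : (i : ℕ) < #s) :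
    shuffle s i = s.orderEmbOfFin rfl ⟨i, hi⟩ := by
  have : finCongr (card_add_card_compl_fin s).symm i = Fin.castAdd #sᶜ ⟨i, hi⟩ := rfl
  rw [shuffle, trans_apply, this, trans_apply, finSumFinEquiv_symm_apply_castAdd,
    finSumEquivOfFinset_inl]

lemma shuffle_apply_of_le {i : Fin m} (hi : #s ≤ (i : ℕ)) :
    shuffle s i = sᶜ.orderEmbOfFin rfl ⟨i - #s, by have := card_add_card_compl_fin s; omega⟩ := by
  have : finCongr (card_add_card_compl_fin s).symm i =
      Fin.natAdd #s ⟨i - #s, by have := card_add_card_compl_fin s; omega⟩ := by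
    ext; simp; omega
  rw [shuffle, trans_apply, this, trans_apply, finSumFinEquiv_symm_apply_natAdd,
    finSumEquivOfFinset_inr]

lemma shuffle_mem_iff {i : Fin m} : shuffle s i ∈ s ↔ (i : ℕ) < #s := by
  by_cases hi : (i : ℕ) < #s
  · simp [shuffle_apply_of_lt hi, hi]
  · have := sᶜ.orderEmbOfFin_mem rfl ⟨i - #s, by have := card_add_card_compl_fin s; omega⟩
    rw [mem_compl] at this
    simp [shuffle_apply_of_le (not_lt.1 hi), this, hi]

lemma strictMonoOn_shuffle_of_lt : StrictMonoOn (shuffle s) {i | (i : ℕ) < #s} := by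
  intro i hi i' hi' h
  rw [shuffle_apply_of_lt hi, shuffle_apply_of_lt hi']
  exact (s.orderEmbOfFin rfl).strictMono h

lemma strictMonoOn_shuffle_of_le : StrictMonoOn (shuffle s) {i | #s ≤ (i : ℕ)} := by
  intro i hi i' hi' h
  rw [shuffle_apply_of_le hi, shuffle_apply_of_le hi']
  simp only [Set.mem_ofPred_eq] at hi hi'
  exact (sᶜ.orderEmbOfFin rfl).strictMono (Fin.mk_lt_mk.2 (by omega))

lemma eq_shuffle {σ : Perm (Fin m)} (hmem : ∀ i, σ i ∈ s ↔ (i : ℕ) < #s)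
    (hlt : StrictMonoOn σ {i | (i : ℕ) < #s}) (hle : StrictMonoOn σ {i | #s ≤ (i : ℕ)}) :
    σ = shuffle s := by
  have hm := card_add_card_compl_fin s
  have first : (fun k : Fin #s => σ ⟨k, by omega⟩) = s.orderEmbOfFin rfl :=
    orderEmbOfFin_unique rfl (fun k => (hmem _).2 k.2) fun k k' h => hlt k.2 k'.2 h
  have second : (fun k : Fin #sᶜ => σ ⟨k + #s, by omega⟩) = sᶜ.orderEmbOfFin rfl :=
    orderEmbOfFin_unique rfl (fun k => by simp [hmem])
      fun k k' h => hle (by simp) (by simp) (by simpa using h)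
  ext i
  by_cases hi : (i : ℕ) < #s
  · rw [shuffle_apply_of_lt hi, ← first]
  · rw [shuffle_apply_of_le (not_lt.1 hi), ← second]
    simp only
    congr 2
    ext
    simp
    omega

end Shuffle

section Descents

variable {m : ℕ} {σ : Perm (Fin m)}

lemma des_eq_one_iff : des σ = 1 ↔ ∃! p : Fin m × Fin m, p.1 ⋖ p.2 ∧ σ p.2 < σ p.1 := by
  simp only [des, Fin.covBy_iff, Nat.covBy_iff_add_one_eq, Fintype.existsUnique_iff_card_one]

lemma exists_strictMonoOn_Iic_Ici_of_des_eq_one (h : des σ = 1) :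
    ∃ q q', q ⋖ q' ∧ StrictMonoOn σ (Set.Iic q) ∧ StrictMonoOn σ (Set.Ici q') := by
  obtain ⟨⟨q, q'⟩, ⟨hcov, -⟩, huniq⟩ := des_eq_one_iff.1 h
  have ascent : ∀ a b, a ⋖ b → a ≠ q → σ a < σ b := fun a b hab ha =>
    (not_lt.1 fun hba => ha (Prod.ext_iff.1 (huniq (a, b) ⟨hab, hba⟩)).1).lt_of_ne
      (σ.injective.ne hab.ne)
  refine ⟨q, q', hcov, strictMonoOn_of_covBy Set.ordConnected_Iic ?_,
    strictMonoOn_of_covBy Set.ordConnected_Ici ?_⟩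
  · exact fun a b hab _ hb => ascent a b hab (hab.lt.trans_le hb).ne
  · exact fun a b hab ha _ => ascent a b hab (hcov.lt.trans_le ha).ne'

end Descents

section ValuesBeforeZero

variable {n : ℕ} {σ : Perm (Fin (n + 1))} {s : Finset (Fin (n + 1))}

def valuesBeforeZero (σ : Perm (Fin (n + 1))) : Finset (Fin (n + 1)) :=
  {v | σ.symm v < σ.symm 0}

lemma apply_mem_valuesBeforeZero_iff {i : Fin (n + 1)} :
    σ i ∈ valuesBeforeZero σ ↔ i < σ.symm 0 := by
  simp [valuesBeforeZero]

lemma card_valuesBeforeZero : #(valuesBeforeZero σ) = σ.symm 0 := by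
  have : valuesBeforeZero σ = (Iio (σ.symm 0)).map σ.toEmbedding := by
    ext v
    simp [valuesBeforeZero]
  rw [this, card_map, Fin.card_Iio]

lemma symm_zero_ne_zero (h0 : σ 0 ≠ 0) : σ.symm 0 ≠ 0 :=
  fun h => h0 (σ.symm_apply_eq.1 h).symm

lemma strictMonoOn_Iio_Ici_symm_zero (h : des σ = 1) (h0 : σ 0 ≠ 0) :
    StrictMonoOn σ (Set.Iio (σ.symm 0)) ∧ StrictMonoOn σ (Set.Ici (σ.symm 0)) := by
  obtain ⟨q, q', hcov, hfirst, hsecond⟩ := exists_strictMonoOn_Iic_Ici_of_des_eq_one h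
  suffices σ.symm 0 = q' by rw [this, hcov.Iio_eq]; exact ⟨hfirst, hsecond⟩
  refine le_antisymm (not_lt.1 fun hlt => ?_) (not_lt.1 fun hlt => ?_)
  · have := hsecond (Set.mem_Ici.2 le_rfl) hlt.le hlt
    simp at this
  · have := hfirst (Fin.zero_le q) (hcov.le_of_lt hlt)
      (Fin.pos_iff_ne_zero.2 (symm_zero_ne_zero h0))
    simp at this

lemma eq_shuffle_valuesBeforeZero (h : des σ = 1) (h0 : σ 0 ≠ 0) :
    σ = shuffle (valuesBeforeZero σ) := by
  obtain ⟨hfirst, hsecond⟩ := strictMonoOn_Iio_Ici_symm_zero h h0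
  have hlt : {i : Fin (n + 1) | (i : ℕ) < #(valuesBeforeZero σ)} = Set.Iio (σ.symm 0) := by
    ext; simp [card_valuesBeforeZero]
  have hle : {i : Fin (n + 1) | #(valuesBeforeZero σ) ≤ (i : ℕ)} = Set.Ici (σ.symm 0) := by
    ext; simp [card_valuesBeforeZero]
  refine eq_shuffle (fun i => ?_) (hlt ▸ hfirst) (hle ▸ hsecond)
  rw [apply_mem_valuesBeforeZero_iff, card_valuesBeforeZero, Fin.lt_def]

lemma apply_zero_mem_valuesBeforeZero (h0 : σ 0 ≠ 0) : σ 0 ∈ valuesBeforeZero σ :=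
  apply_mem_valuesBeforeZero_iff.2 (Fin.pos_iff_ne_zero.2 (symm_zero_ne_zero h0))

lemma apply_zero_le_of_mem_valuesBeforeZero (h : des σ = 1) (h0 : σ 0 ≠ 0) {v : Fin (n + 1)}
    (hv : v ∈ valuesBeforeZero σ) : σ 0 ≤ v := by
  rw [← σ.apply_symm_apply v] at hv ⊢
  exact ((strictMonoOn_Iio_Ici_symm_zero h h0).1.le_iff_le
    (Fin.pos_iff_ne_zero.2 (symm_zero_ne_zero h0)) (apply_mem_valuesBeforeZero_iff.1 hv)).2
    (Fin.zero_le _)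

lemma shuffle_symm_zero (h0 : 0 ∉ s) : ((shuffle s).symm 0 : ℕ) = #s := by
  set p := (shuffle s).symm 0
  have hp : shuffle s p = 0 := (shuffle s).apply_symm_apply 0
  have hle : #s ≤ p := not_lt.1 fun hlt => h0 (hp ▸ shuffle_mem_iff.2 hlt)
  refine le_antisymm (not_lt.1 fun hlt => ?_) hle
  have := strictMonoOn_shuffle_of_le (s := s) (a := ⟨#s, by omega⟩) (le_refl #s) hle
    (Fin.mk_lt_of_lt_val hlt)
  simp [hp] at this

lemma valuesBeforeZero_shuffle (h0 : 0 ∉ s) : valuesBeforeZero (shuffle s) = s := by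
  ext v
  rw [← (shuffle s).apply_symm_apply v, apply_mem_valuesBeforeZero_iff, Fin.lt_def,
    shuffle_symm_zero h0, shuffle_mem_iff]

lemma shuffle_apply_zero (hs : s.Nonempty) : shuffle s 0 = s.min' hs := by
  rw [shuffle_apply_of_lt (card_pos.2 hs)]
  exact orderEmbOfFin_zero rfl (card_pos.2 hs)

lemma des_shuffle (hs : s.Nonempty) (h0 : 0 ∉ s) : des (shuffle s) = 1 := by
  have hp := shuffle_symm_zero h0
  have hcard := card_pos.2 hs
  set p := (shuffle s).symm 0
  set q : Fin (n + 1) := ⟨#s - 1, by omega⟩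
  have hqp : q ⋖ p := by simp [q, hp]; omega
  refine des_eq_one_iff.2 ⟨(q, p), ⟨hqp, ?_⟩, fun ⟨a, b⟩ ⟨hab, hba⟩ => ?_⟩
  · rw [(shuffle s).apply_symm_apply, Fin.pos_iff_ne_zero, ← (shuffle s).apply_symm_apply 0]
    exact (shuffle s).injective.ne hqp.ne
  · have hab' : (a : ℕ) + 1 = b := by simpa using hab
    by_cases hb : (b : ℕ) < #s
    · exact absurd (strictMonoOn_shuffle_of_lt (by simp; omega) hb hab.lt) (not_lt.2 hba.le)
    by_cases ha : #s ≤ (a : ℕ)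
    · exact absurd (strictMonoOn_shuffle_of_le ha (by simp; omega) hab.lt) (not_lt.2 hba.le)
    simp only [Prod.mk.injEq, Fin.ext_iff, q, hp]
    omega

end ValuesBeforeZero

theorem card_des_eq_one_apply_zero_eq {n : ℕ} {a : Fin (n + 1)} (ha : a ≠ 0) :
    #{σ : Perm (Fin (n + 1)) | des σ = 1 ∧ σ 0 = a} = 2 ^ (n - a) := by
  have hIoi : #(Ioi a) = n - a := by simp
  rw [← hIoi, ← card_powerset]
  have hzero : ∀ T ⊆ Ioi a, 0 ∉ insert a T := fun T hT h0 =>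
    (mem_insert.1 h0).elim (fun h => ha h.symm) fun h => by simpa using hT h
  have hmin : ∀ T ⊆ Ioi a, (insert a T).min' (insert_nonempty a T) = a := fun T hT =>
    le_antisymm (min'_le _ _ (mem_insert_self a T))
      (le_min' _ _ _ fun v hv => (mem_insert.1 hv).elim ge_of_eq fun h => (mem_Ioi.1 (hT h)).le)
  refine card_nbij' (fun σ => (valuesBeforeZero σ).erase a) (fun T => shuffle (insert a T))
    (fun σ hσ => ?_) (fun T hT => ?_) (fun σ hσ => ?_) (fun T hT => ?_)
  all_goals simp only [coe_filter, coe_powerset, mem_univ, true_and, Set.mem_ofPred_eq,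
    Set.mem_preimage] at *
  · obtain ⟨hdes, rfl⟩ := hσ
    exact fun v hv => mem_Ioi.2 ((apply_zero_le_of_mem_valuesBeforeZero hdes ha
      (mem_of_mem_erase hv)).lt_of_ne (ne_of_mem_erase hv).symm)
  · rw [shuffle_apply_zero (insert_nonempty a T), hmin T hT]
    exact ⟨des_shuffle (insert_nonempty a T) (hzero T hT), rfl⟩
  · obtain ⟨hdes, rfl⟩ := hσ
    rw [insert_erase (apply_zero_mem_valuesBeforeZero ha)]
    exact (eq_shuffle_valuesBeforeZero hdes ha).symm
  · rw [valuesBeforeZero_shuffle (hzero T hT)]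
    exact erase_insert fun h => by simpa using hT h

/-- `h^{(d)}_{0,j} = A(d+2, 1, j+2) = 2^{d-j}`: the number of permutations of `{1,…,d+2}`
with exactly one descent and first value `j+2` is `2^{d-j}`, for `0 ≤ j ≤ d`. -/
theorem stmt12 (d j : ℕ) (hj : j ≤ d) : Anum (d + 2) 2 (j + 2) = 2 ^ (d - j) := by
  have hfilter : Anum (d + 2) 2 (j + 2) =
      #{σ : Perm (Fin (d + 2)) | des σ = 1 ∧ σ 0 = ⟨j + 1, by omega⟩} := by
    unfold Anum
    congr! 2 with σ
    simp [Fin.ext_iff]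
  rw [hfilter, card_des_eq_one_apply_zero_eq (by simp [Fin.ext_iff])]
  exact congrArg (2 ^ ·) (Nat.add_sub_add_right d 1 j)
end

section
/- For d ≥ 1, the leading subdominant coefficient of the H-polynomial satisfies √2^d / ((d+1)! · d) ≤ H_{1,d} ≤ 2^{d+1} / (d+1)!. -/
open Polynomial

/-- Stirling numbers of the second kind. -/
def stirling2 : ℕ → ℕ → ℕ
  | 0, 0 => 1
  | 0, _ + 1 => 0
  | _ + 1, 0 => 0
  | n + 1, k + 1 => (k + 1) * stirling2 n (k + 1) + stirling2 n k

/-- `fnum (i+1) (j+1) = f_{i,j} = (i+1)! S(j+1, i+1)`. -/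
def fnum (a b : ℕ) : ℕ := a.factorial * stirling2 b a

/-- `FratAux d m = F_{d-m, d}`, via the downward recurrence
`F_{i,d} = (1/((d+1)! - (i+1)!)) Σ_{j=i+1}^{d} f_{i,j} F_{j,d}`, `F_{d,d} = 1`, `F_{-1,d} = 0`. -/
def FratAux (d : ℕ) : ℕ → ℚ
  | 0 => 1
  | m + 1 =>
    if d ≤ m then 0
    else (1 / (((d + 1).factorial : ℚ) - ((d - m).factorial : ℚ))) *
      ∑ k ∈ (Finset.range (m + 1)).attach,
        (fnum (d - m) (d - k.1 + 1) : ℚ) * FratAux d k.1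
  decreasing_by
    have := k.2; simp only [Finset.mem_range] at this; omega

/-- `Frat d t = F_{t-1, d}`. -/
def Frat (d t : ℕ) : ℚ := FratAux d (d + 1 - t)

/-- The `F`-polynomial `F_d(z) = Σ_{i=-1}^{d} F_{i,d} z^{d-i}`. -/
noncomputable def Fpoly (d : ℕ) : Polynomial ℚ :=
  ∑ t ∈ Finset.range (d + 2), C (Frat d t) * X ^ (d + 1 - t)

/-- The `H`-polynomial `H_d(z) = F_d(z-1)`. -/
noncomputable def Hpoly (d : ℕ) : Polynomial ℚ := (Fpoly d).comp (X - 1)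

/-- `H_{i,d}`: the coefficient of `z^{d+1-i}` in `H_d(z)`. -/
noncomputable def Hcoef (d i : ℕ) : ℚ := (Hpoly d).coeff (d + 1 - i)

namespace StmtAux
open Finset


lemma s2_succ_succ (n k : ℕ) :
    stirling2 (n+1) (k+1) = (k+1) * stirling2 n (k+1) + stirling2 n k := rfl

lemma s2_succ_zero (n : ℕ) : stirling2 (n+1) 0 = 0 := rfl

lemma s2_eq_zero {n k : ℕ} (h : n < k) : stirling2 n k = 0 := by
  induction n generalizing k with
  | zero => cases k with | zero => omega | succ k => rfl
  | succ n ih =>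
    cases k with
    | zero => omega
    | succ k => rw [s2_succ_succ, ih (by omega), ih (by omega)]; ring

lemma s2_one (n : ℕ) : stirling2 (n+1) 1 = 1 := by
  induction n with
  | zero => rfl
  | succ n ih => rw [s2_succ_succ, ih]; simp [s2_succ_zero]

lemma s2_self (n : ℕ) : stirling2 n n = 1 := by
  induction n with
  | zero => rfl
  | succ n ih => rw [s2_succ_succ, ih, s2_eq_zero (by omega)]; ring

/-- Key identity: (k+1)·S(n,k+1) = Σ_{i<n} C(n,i+1)·S(n-1-i,k). -/
lemma s2_key (n k : ℕ) :
    (k+1) * stirling2 n (k+1)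
      = ∑ i ∈ Finset.range n, n.choose (i+1) * stirling2 (n - 1 - i) k := by
  induction n generalizing k with
  | zero => simp [s2_eq_zero]
  | succ n ih =>
    have split : ∑ i ∈ Finset.range (n+1), (n+1).choose (i+1) * stirling2 (n+1-1-i) k
        = (∑ i ∈ Finset.range (n+1), n.choose (i+1) * stirling2 (n-i) k)
          + ∑ i ∈ Finset.range (n+1), n.choose i * stirling2 (n-i) k := by
      rw [← Finset.sum_add_distrib]
      refine Finset.sum_congr rfl fun i hi => ?_
      rw [Nat.choose_succ_succ, show n+1-1-i = n-i from by omega, add_mul]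
      ring
    have second : ∑ i ∈ Finset.range (n+1), n.choose i * stirling2 (n-i) k
        = stirling2 n k + ∑ i ∈ Finset.range n, n.choose (i+1) * stirling2 (n-1-i) k := by
      rw [Finset.sum_range_succ' (fun i => n.choose i * stirling2 (n-i) k) n]
      rw [Nat.choose_zero_right, one_mul, Nat.sub_zero, add_comm]
      congr 1
      refine Finset.sum_congr rfl fun i hi => ?_
      simp only [Finset.mem_range] at hi
      rw [show n-(i+1) = n-1-i from by omega]
    have first : ∑ i ∈ Finset.range (n+1), n.choose (i+1) * stirling2 (n-i) k
        = ∑ i ∈ Finset.range n, n.choose (i+1) * stirling2 (n-1-i+1) k := by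
      rw [Finset.sum_range_succ, Nat.choose_succ_self, zero_mul, add_zero]
      refine Finset.sum_congr rfl fun i hi => ?_
      simp only [Finset.mem_range] at hi
      rw [show n-i = n-1-i+1 from by omega]
    rw [split, second, first]
    cases k with
    | zero =>
      rw [Finset.sum_eq_zero (fun i _ => by rw [s2_succ_zero, mul_zero]), ← ih 0, zero_add]
      rw [s2_succ_succ]; ring
    | succ k =>
      have e1 : ∑ i ∈ Finset.range n, n.choose (i+1) * stirling2 (n-1-i+1) (k+1)
          = (k+1) * ∑ i ∈ Finset.range n, n.choose (i+1) * stirling2 (n-1-i) (k+1)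
            + ∑ i ∈ Finset.range n, n.choose (i+1) * stirling2 (n-1-i) k := by
        rw [Finset.mul_sum, ← Finset.sum_add_distrib]
        refine Finset.sum_congr rfl fun i hi => ?_
        rw [s2_succ_succ]; ring
      rw [e1, ← ih (k+1), ← ih k, s2_succ_succ]
      ring

/-- Fubini numbers. -/
def fub (n : ℕ) : ℕ := ∑ k ∈ range (n+1), k.factorial * stirling2 n k

/-- Weighted Fubini-type sum. -/
def Wf (n : ℕ) : ℕ := ∑ k ∈ range (n+1), k.factorial * stirling2 n k * 2^(n-k)

def Zf (n m : ℕ) : ℕ :=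
  ∑ l ∈ range (n+1), stirling2 l m * l.factorial * stirling2 n l * 2^(n-l)

lemma fub_zero : fub 0 = 1 := rfl

/-- zero-extension : sums of this shape can extend the range. -/
lemma sum_ext (m p : ℕ) (h : m < p) (g : ℕ → ℕ) :
    ∑ k ∈ range p, k.factorial * stirling2 m k * g k
      = ∑ k ∈ range (m+1), k.factorial * stirling2 m k * g k := by
  symm
  apply Finset.sum_subset
  · intro x hx; simp only [mem_range] at *; omega
  · intro x hx hx'
    simp only [mem_range] at hx hx'
    rw [s2_eq_zero (by omega)]
    ring

/-- Composition identity for Fubini numbers. -/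
lemma fub_comp (n : ℕ) :
    fub (n+1) = ∑ i ∈ range (n+1), (n+1).choose (i+1) * fub (n-i) := by
  have h1 : fub (n+1) = ∑ k ∈ range (n+1), (k+1).factorial * stirling2 (n+1) (k+1) := by
    rw [fub, Finset.sum_range_succ'  (fun k => k.factorial * stirling2 (n+1) k) (n+1)]
    simp [s2_succ_zero]
  rw [h1]
  have h2 : ∀ k, (k+1).factorial * stirling2 (n+1) (k+1)
      = k.factorial * ((k+1) * stirling2 (n+1) (k+1)) := fun k => by
    rw [Nat.factorial_succ]; ring
  simp_rw [h2, s2_key (n+1), Finset.mul_sum]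
  rw [Finset.sum_comm]
  refine Finset.sum_congr rfl fun i hi => ?_
  simp only [mem_range] at hi
  calc ∑ k ∈ range (n+1), k.factorial * ((n+1).choose (i+1) * stirling2 (n+1-1-i) k)
      = ∑ k ∈ range (n+1), k.factorial * stirling2 (n-i) k * (n+1).choose (i+1) := by
        refine Finset.sum_congr rfl fun k _ => ?_
        rw [show n+1-1-i = n-i from by omega]; ring
    _ = (∑ k ∈ range (n+1), k.factorial * stirling2 (n-i) k) * (n+1).choose (i+1) := by
        rw [Finset.sum_mul]
    _ = (n+1).choose (i+1) * fub (n-i) := by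
        rw [mul_comm]
        congr 1
        rcases Nat.eq_or_lt_of_le (Nat.sub_le n i) with h | h
        · rw [h, fub]
        · have := sum_ext (n-i) (n+1) (by omega) (fun _ => 1)
          simp only [mul_one] at this
          rw [this, fub]

/-- Composition identity for W. -/
lemma Wf_comp (n : ℕ) :
    Wf (n+1) = ∑ i ∈ range (n+1), (n+1).choose (i+1) * 2^i * Wf (n-i) := by
  have h1 : Wf (n+1) = ∑ k ∈ range (n+1), (k+1).factorial * stirling2 (n+1) (k+1) * 2^(n-k) := by
    rw [Wf, Finset.sum_range_succ' (fun k => k.factorial * stirling2 (n+1) k * 2^(n+1-k)) (n+1)]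
    rw [s2_succ_zero]
    simp only [mul_zero, zero_mul, add_zero]
    refine Finset.sum_congr rfl fun k hk => ?_
    simp only [mem_range] at hk
    rw [show n+1-(k+1) = n-k from by omega]
  rw [h1]
  have h2 : ∀ k, (k+1).factorial * stirling2 (n+1) (k+1) * 2^(n-k)
      = k.factorial * 2^(n-k) * ((k+1) * stirling2 (n+1) (k+1)) := fun k => by
    rw [Nat.factorial_succ]; ring
  simp_rw [h2, s2_key (n+1), Finset.mul_sum]
  rw [Finset.sum_comm]
  refine Finset.sum_congr rfl fun i hi => ?_
  simp only [mem_range] at hi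
  calc ∑ k ∈ range (n+1), k.factorial * 2^(n-k) * ((n+1).choose (i+1) * stirling2 (n+1-1-i) k)
      = ∑ k ∈ range (n+1), k.factorial * stirling2 (n-i) k * ((n+1).choose (i+1) * 2^(n-k)) := by
        refine Finset.sum_congr rfl fun k _ => ?_
        rw [show n+1-1-i = n-i from by omega]; ring
    _ = (n+1).choose (i+1) * 2^i * Wf (n-i) := by
        rw [show ∑ k ∈ range (n+1), k.factorial * stirling2 (n-i) k * ((n+1).choose (i+1) * 2^(n-k))
            = ∑ k ∈ range (n-i+1), k.factorial * stirling2 (n-i) k * ((n+1).choose (i+1) * 2^(n-k)) from ?_]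
        · rw [Wf, Finset.mul_sum]
          refine Finset.sum_congr rfl fun k hk => ?_
          simp only [mem_range] at hk
          rw [show n-k = i + (n-i-k) from by omega, pow_add]
          ring
        · rcases Nat.lt_or_ge (n-i) n with h | h
          · exact sum_ext (n-i) (n+1) (by omega) _
          · rw [show n - i = n from by omega]




lemma two_pow_le_fact (p : ℕ) : 2^p ≤ (p+1).factorial := by
  induction p with
  | zero => simp
  | succ p ih =>
    rw [pow_succ, Nat.factorial_succ]
    have : 2 ≤ p + 2 := by omega
    calc 2^p * 2 ≤ (p+1).factorial * (p+2) := Nat.mul_le_mul ih this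
      _ = (p+2) * (p+1).factorial := by ring

lemma sum_inv_fact (p : ℕ) :
    ∑ j ∈ range p, (1:ℚ)/((j+1).factorial) ≤ 2 - 2/2^p := by
  induction p with
  | zero => simp
  | succ p ih =>
    rw [Finset.sum_range_succ]
    have h1 : (1:ℚ)/((p+1).factorial) ≤ 1/2^p := by
      apply div_le_div_of_nonneg_left (by norm_num) (by positivity)
      exact_mod_cast two_pow_le_fact p
    have h2 : (2:ℚ)/2^p - 2/2^(p+1) = 1/2^p := by
      rw [pow_succ]; field_simp; ring
    linarith
lemma Wf_zero : Wf 0 = 1 := rfl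

lemma Wf_le : ∀ n, 1 ≤ n → (Wf n : ℚ) ≤ 2^(n-1) * (n.factorial : ℚ) := by
  intro n
  induction n using Nat.strong_induction_on with
  | _ n ih =>
    intro hn
    obtain ⟨m, rfl⟩ : ∃ m, n = m + 1 := ⟨n - 1, by omega⟩
    rcases Nat.eq_zero_or_pos m with rfl | hm
    · norm_num [show Wf 1 = 1 from rfl]
    rw [Wf_comp]
    rw [Finset.sum_range_succ]
    have last : (m+1).choose (m+1) * 2^m * Wf (m-m) = 2^m := by
      simp [Wf_zero]
    push_cast [last]
    have hbound : ∀ i ∈ range m, ((m+1).choose (i+1) * 2^i * Wf (m-i) : ℚ)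
        ≤ 2^(m-1) * ((m+1).factorial : ℚ) / ((i+1).factorial : ℚ) := by
      intro i hi
      simp only [mem_range] at hi
      have h1 : (Wf (m-i) : ℚ) ≤ 2^(m-i-1) * ((m-i).factorial : ℚ) :=
        ih (m-i) (by omega) (by omega)
      have hcm : ((m+1).choose (i+1) : ℚ) * ((m-i).factorial : ℚ)
          = ((m+1).factorial : ℚ) / ((i+1).factorial : ℚ) := by
        have := Nat.choose_mul_factorial_mul_factorial (show i+1 ≤ m+1 by omega)
        rw [show m+1-(i+1) = m-i from by omega] at this
        have hcast : ((m+1).choose (i+1) * (i+1).factorial * (m-i).factorial : ℚ)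
            = ((m+1).factorial : ℚ) := by exact_mod_cast congrArg (Nat.cast : ℕ → ℚ) this
        field_simp
        nlinarith [hcast]
      have hpow : (2:ℚ)^i * 2^(m-i-1) = 2^(m-1) := by
        rw [← pow_add, show i + (m-i-1) = m-1 from by omega]
      calc ((m+1).choose (i+1) * 2^i * Wf (m-i) : ℚ)
          ≤ ((m+1).choose (i+1) : ℚ) * 2^i * (2^(m-i-1) * ((m-i).factorial : ℚ)) := by
            apply mul_le_mul_of_nonneg_left h1 (by positivity)
        _ = 2^(m-1) * (((m+1).choose (i+1) : ℚ) * ((m-i).factorial : ℚ)) := by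
            rw [← hpow]; ring
        _ = 2^(m-1) * ((m+1).factorial : ℚ) / ((i+1).factorial : ℚ) := by
            rw [hcm]; ring
    have hsum : ∑ i ∈ range m, ((m+1).choose (i+1) * 2^i * Wf (m-i) : ℚ)
        ≤ 2^(m-1) * ((m+1).factorial : ℚ) * (2 - 2/2^m) := by
      calc ∑ i ∈ range m, ((m+1).choose (i+1) * 2^i * Wf (m-i) : ℚ)
          ≤ ∑ i ∈ range m, 2^(m-1) * ((m+1).factorial : ℚ) / ((i+1).factorial : ℚ) :=
            Finset.sum_le_sum hbound
        _ = 2^(m-1) * ((m+1).factorial : ℚ) * ∑ i ∈ range m, 1/((i+1).factorial : ℚ) := by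
            rw [Finset.mul_sum]
            refine Finset.sum_congr rfl fun i _ => by ring
        _ ≤ 2^(m-1) * ((m+1).factorial : ℚ) * (2 - 2/2^m) := by
            apply mul_le_mul_of_nonneg_left (sum_inv_fact m) (by positivity)
    have hfin : 2^(m-1) * ((m+1).factorial : ℚ) * (2 - 2/2^m) + 2^m
        ≤ 2^(m+1-1) * ((m+1).factorial : ℚ) := by
      have h2m : (2:ℚ)^m ≤ ((m+1).factorial : ℚ) := by exact_mod_cast two_pow_le_fact m
      have hp : (2:ℚ)^(m-1) * 2 = 2^m := by
        obtain ⟨p, rfl⟩ : ∃ p, m = p + 1 := ⟨m - 1, by omega⟩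
        rw [show p+1-1 = p from rfl, pow_succ]
      have hq : (2:ℚ)^(m-1) * (2/2^m) = 2^(m-1)*2/2^m := by ring
      have hr : (2:ℚ)^(m-1)*2/2^m = 1 := by rw [hp]; field_simp
      have : 2^(m-1) * ((m+1).factorial : ℚ) * (2 - 2/2^m)
          = 2^m * ((m+1).factorial : ℚ) - ((m+1).factorial : ℚ) := by
        rw [mul_sub]
        rw [show (2:ℚ)^(m-1) * ((m+1).factorial:ℚ) * 2 = (2^(m-1)*2) * ((m+1).factorial:ℚ) from by ring]
        rw [hp]
        rw [show (2:ℚ)^(m-1) * ((m+1).factorial:ℚ) * (2/2^m) = (2^(m-1)*2/2^m) * ((m+1).factorial:ℚ) from by ring]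
        rw [hr, one_mul]
      rw [this, show m+1-1 = m from rfl]
      linarith
    calc (∑ i ∈ range m, ((m+1).choose (i+1) * 2^i * Wf (m-i) : ℚ)) + 2^m
        ≤ 2^(m-1) * ((m+1).factorial : ℚ) * (2 - 2/2^m) + 2^m := by linarith
      _ ≤ 2^(m+1-1) * ((m+1).factorial : ℚ) := hfin




lemma Zf_one (n : ℕ) (hn : 1 ≤ n) : Zf n 1 = Wf n := by
  rw [Zf, Wf]
  refine Finset.sum_congr rfl fun l hl => ?_
  cases l with
  | zero =>
    obtain ⟨p, rfl⟩ : ∃ p, n = p + 1 := ⟨n-1, by omega⟩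
    simp [stirling2, s2_succ_zero]
  | succ i => rw [s2_one]; ring

lemma Zf_rec (n m : ℕ) :
    Zf (n+1) m = ∑ l ∈ range (n+1),
      l.factorial * stirling2 n l * 2^(n-l)
        * (2*l*(stirling2 l m) + (l+1) * stirling2 (l+1) m) := by
  rw [Zf]
  rw [Finset.sum_range_succ' (fun l => stirling2 l m * l.factorial * stirling2 (n+1) l * 2^(n+1-l)) (n+1)]
  rw [s2_succ_zero]
  simp only [mul_zero, zero_mul, add_zero]
  have expand : ∀ i ∈ range (n+1),
      stirling2 (i+1) m * (i+1).factorial * stirling2 (n+1) (i+1) * 2^(n+1-(i+1))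
      = (stirling2 (i+1) m * (i+1).factorial * (i+1) * stirling2 n (i+1) * 2^(n-i))
        + i.factorial * stirling2 n i * 2^(n-i) * ((i+1) * stirling2 (i+1) m) := by
    intro i hi
    rw [s2_succ_succ n i, show n+1-(i+1) = n-i from by omega, Nat.factorial_succ]
    ring
  rw [Finset.sum_congr rfl expand, Finset.sum_add_distrib]
  have hA : ∑ i ∈ range (n+1), (stirling2 (i+1) m * (i+1).factorial * (i+1) * stirling2 n (i+1) * 2^(n-i))
      = ∑ l ∈ range (n+1), l.factorial * stirling2 n l * 2^(n-l) * (2*l*(stirling2 l m)) := by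
    have g0 : ∀ l, stirling2 l m * l.factorial * l * stirling2 n l * 2^(n+1-l)
        = (fun l => stirling2 l m * l.factorial * l * stirling2 n l * 2^(n+1-l)) l := fun l => rfl
    have e1 : ∑ i ∈ range (n+1), (stirling2 (i+1) m * (i+1).factorial * (i+1) * stirling2 n (i+1) * 2^(n-i))
        = ∑ l ∈ range (n+2), stirling2 l m * l.factorial * l * stirling2 n l * 2^(n+1-l) := by
      rw [Finset.sum_range_succ' (fun l => stirling2 l m * l.factorial * l * stirling2 n l * 2^(n+1-l)) (n+1)]
      simp only [mul_zero, zero_mul, add_zero]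
      refine Finset.sum_congr rfl fun i hi => ?_
      rw [show n+1-(i+1) = n-i from by omega]
    rw [e1, Finset.sum_range_succ, s2_eq_zero (show n < n+1 by omega)]
    simp only [mul_zero, zero_mul, add_zero]
    refine Finset.sum_congr rfl fun l hl => ?_
    simp only [mem_range] at hl
    rw [show n+1-l = (n-l)+1 from by omega, pow_succ]
    ring
  rw [hA, ← Finset.sum_add_distrib]
  refine Finset.sum_congr rfl fun l hl => by ring

lemma Zf_zero_of_lt {n m : ℕ} (h : n < m) : Zf n m = 0 := by
  rw [Zf]
  refine Finset.sum_eq_zero fun l hl => ?_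
  simp only [mem_range] at hl
  rw [s2_eq_zero (show l < m by omega)]
  ring

lemma Zf_le : ∀ n m : ℕ, 1 ≤ m → Zf n m ≤ n.factorial * stirling2 n m * 2^(n-m) := by
  intro n
  induction n with
  | zero =>
    intro m hm
    rw [Zf_zero_of_lt (by omega)]; exact Nat.zero_le _
  | succ n ih =>
    intro m hm
    rcases Nat.lt_or_ge (n+1) m with hbig | hle
    · rw [Zf_zero_of_lt hbig]; exact Nat.zero_le _
    match m, hm with
    | 1, _ =>
      rw [Zf_one (n+1) (by omega)]
      have h1 : (Wf (n+1) : ℚ) ≤ 2^n * ((n+1).factorial : ℚ) := by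
        have := Wf_le (n+1) (by omega)
        rwa [show n+1-1 = n from rfl] at this
      have h2 : Wf (n+1) ≤ 2^n * (n+1).factorial := by exact_mod_cast h1
      rw [s2_one, show n+1-1 = n from rfl]
      calc Wf (n+1) ≤ 2^n * (n+1).factorial := h2
        _ = (n+1).factorial * 1 * 2^n := by ring
    | (m'+2), _ =>
      set m := m' + 2 with hmdef
      -- termwise bound after Zf_rec
      have step2 : Zf (n+1) m ≤ 2*(n+1)*m * Zf n m + (n+1) * Zf n (m-1) := by
        rw [Zf_rec]
        have tb : ∀ l ∈ range (n+1),
            l.factorial * stirling2 n l * 2^(n-l)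
              * (2*l*(stirling2 l m) + (l+1) * stirling2 (l+1) m)
            ≤ 2*(n+1)*m * (stirling2 l m * l.factorial * stirling2 n l * 2^(n-l))
              + (n+1) * (stirling2 l (m-1) * l.factorial * stirling2 n l * 2^(n-l)) := by
          intro l hl
          simp only [mem_range] at hl
          have hexp : stirling2 (l+1) m = m * stirling2 l m + stirling2 l (m-1) := by
            rw [hmdef, s2_succ_succ l (m'+1)]
            rfl
          rw [hexp]
          have key : 2*l*(stirling2 l m) + (l+1) * (m * stirling2 l m + stirling2 l (m-1))
              ≤ 2*(n+1)*m * stirling2 l m + (n+1) * stirling2 l (m-1) := by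
            have c1 : 2*l + (l+1)*m ≤ 2*(n+1)*m := by
              have e1 : 2*l ≤ (n+1)*2 := by omega
              have e2 : (n+1)*2 ≤ (n+1)*m := Nat.mul_le_mul_left _ (by omega)
              have e3 : (l+1)*m ≤ (n+1)*m := Nat.mul_le_mul_right _ (by omega)
              calc 2*l + (l+1)*m ≤ (n+1)*m + (n+1)*m := by omega
                _ = 2*(n+1)*m := by ring
            have c2 : (l+1) ≤ n+1 := by omega
            calc 2*l*(stirling2 l m) + (l+1) * (m * stirling2 l m + stirling2 l (m-1))
                = (2*l + (l+1)*m) * stirling2 l m + (l+1) * stirling2 l (m-1) := by ring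
              _ ≤ 2*(n+1)*m * stirling2 l m + (n+1) * stirling2 l (m-1) :=
                  Nat.add_le_add (Nat.mul_le_mul_right _ c1) (Nat.mul_le_mul_right _ c2)
          calc l.factorial * stirling2 n l * 2^(n-l)
                * (2*l*(stirling2 l m) + (l+1) * (m * stirling2 l m + stirling2 l (m-1)))
              ≤ l.factorial * stirling2 n l * 2^(n-l)
                * (2*(n+1)*m * stirling2 l m + (n+1) * stirling2 l (m-1)) :=
                Nat.mul_le_mul_left _ key
            _ = 2*(n+1)*m * (stirling2 l m * l.factorial * stirling2 n l * 2^(n-l))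
              + (n+1) * (stirling2 l (m-1) * l.factorial * stirling2 n l * 2^(n-l)) := by ring
        calc ∑ l ∈ range (n+1), l.factorial * stirling2 n l * 2^(n-l)
              * (2*l*(stirling2 l m) + (l+1) * stirling2 (l+1) m)
            ≤ ∑ l ∈ range (n+1), (2*(n+1)*m * (stirling2 l m * l.factorial * stirling2 n l * 2^(n-l))
              + (n+1) * (stirling2 l (m-1) * l.factorial * stirling2 n l * 2^(n-l))) :=
              Finset.sum_le_sum tb
          _ = 2*(n+1)*m * Zf n m + (n+1) * Zf n (m-1) := by
              rw [Finset.sum_add_distrib, Zf, Zf, Finset.mul_sum, Finset.mul_sum]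
      have ihm : Zf n m ≤ n.factorial * stirling2 n m * 2^(n-m) := ih m (by omega)
      have ihm1 : Zf n (m-1) ≤ n.factorial * stirling2 n (m-1) * 2^(n-(m-1)) := ih (m-1) (by omega)
      have goalS : stirling2 (n+1) m = m * stirling2 n m + stirling2 n (m-1) := by
        rw [hmdef, s2_succ_succ n (m'+1)]; rfl
      rcases Nat.lt_or_ge n m with hcase | hcase
      · -- m = n+1
        have hmn : m = n + 1 := by omega
        have z1 : stirling2 n m = 0 := s2_eq_zero (by omega)
        have z2 : stirling2 n (m-1) = 1 := by rw [show m - 1 = n from by omega, s2_self]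
        calc Zf (n+1) m ≤ 2*(n+1)*m * Zf n m + (n+1) * Zf n (m-1) := step2
          _ ≤ 2*(n+1)*m * (n.factorial * stirling2 n m * 2^(n-m))
              + (n+1) * (n.factorial * stirling2 n (m-1) * 2^(n-(m-1))) :=
            Nat.add_le_add (Nat.mul_le_mul_left _ ihm) (Nat.mul_le_mul_left _ ihm1)
          _ = (n+1).factorial * stirling2 (n+1) m * 2^(n+1-m) := by
            rw [goalS, z1, z2, Nat.factorial_succ, show n-(m-1) = 0 from by omega,
              show n+1-m = 0 from by omega]
            ring
      · -- m ≤ n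
        calc Zf (n+1) m ≤ 2*(n+1)*m * Zf n m + (n+1) * Zf n (m-1) := step2
          _ ≤ 2*(n+1)*m * (n.factorial * stirling2 n m * 2^(n-m))
              + (n+1) * (n.factorial * stirling2 n (m-1) * 2^(n-(m-1))) :=
            Nat.add_le_add (Nat.mul_le_mul_left _ ihm) (Nat.mul_le_mul_left _ ihm1)
          _ = (n+1).factorial * stirling2 (n+1) m * 2^(n+1-m) := by
            rw [goalS, Nat.factorial_succ, show n-(m-1) = n+1-m from by omega,
              show n+1-m = (n-m)+1 from by omega, pow_succ]
            ring
      
lemma FratAux_succ (d m : ℕ) (h : m < d) :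
    FratAux d (m + 1) = (1 / (((d + 1).factorial : ℚ) - ((d - m).factorial : ℚ))) *
      ∑ k ∈ Finset.range (m + 1), (fnum (d - m) (d - k + 1) : ℚ) * FratAux d k := by
  rw [FratAux, if_neg (by omega)]
  congr 1
  rw [← Finset.sum_attach (range (m+1)) (fun k => (fnum (d - m) (d - k + 1) : ℚ) * FratAux d k)]

lemma denom_pos {d m : ℕ} (h : m < d) :
    (0:ℚ) < ((d + 1).factorial : ℚ) - ((d - m).factorial : ℚ) := by
  have h1 : (d - m).factorial < (d+1).factorial :=
    Nat.factorial_lt_of_lt (by omega) (by omega)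
  have : ((d-m).factorial : ℚ) < ((d+1).factorial : ℚ) := by exact_mod_cast h1
  linarith

lemma FratAux_nonneg (d : ℕ) : ∀ m, 0 ≤ FratAux d m := by
  intro m
  induction m using Nat.strong_induction_on with
  | _ m ih =>
    match m with
    | 0 => rw [FratAux]; norm_num
    | m + 1 =>
      rcases Nat.lt_or_ge m d with h | h
      · rw [FratAux_succ d m h]
        apply mul_nonneg
        · have := denom_pos (d := d) (m := m) h
          positivity
        · apply Finset.sum_nonneg
          intro k hk
          simp only [mem_range] at hk
          exact mul_nonneg (by positivity) (ih k (by omega))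
      · rw [FratAux, if_pos (by omega)]

/-- Lower bound for the interior values. -/
lemma FratAux_lower {d m : ℕ} (h : m < d) :
    ((d-m).factorial * stirling2 (d+1) (d-m) : ℚ) / ((d+1).factorial : ℚ)
      ≤ FratAux d (m+1) := by
  have hD := denom_pos (d := d) (m := m) h
  rw [FratAux_succ d m h]
  have hterm : ((d-m).factorial * stirling2 (d+1) (d-m) : ℚ)
      ≤ ∑ k ∈ Finset.range (m + 1), (fnum (d - m) (d - k + 1) : ℚ) * FratAux d k := by
    have h0 : ((fnum (d - m) (d - 0 + 1) : ℕ) : ℚ) * FratAux d 0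
        = ((d-m).factorial * stirling2 (d+1) (d-m) : ℚ) := by
      rw [show FratAux d 0 = 1 from by rw [FratAux], mul_one, fnum, show d - 0 + 1 = d + 1 from by omega]
      push_cast
      ring
    calc ((d-m).factorial * stirling2 (d+1) (d-m) : ℚ)
        = ((fnum (d - m) (d - 0 + 1) : ℕ) : ℚ) * FratAux d 0 := h0.symm
      _ ≤ ∑ k ∈ Finset.range (m + 1), (fnum (d - m) (d - k + 1) : ℚ) * FratAux d k := by
          apply Finset.single_le_sum (f := fun k => ((fnum (d - m) (d - k + 1) : ℕ) : ℚ) * FratAux d k)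
            (fun k hk => mul_nonneg (by positivity) (FratAux_nonneg d k))
          simp
  have hDle : ((d + 1).factorial : ℚ) - ((d - m).factorial : ℚ) ≤ ((d+1).factorial : ℚ) := by
    have : (0:ℚ) ≤ ((d-m).factorial : ℚ) := by positivity
    linarith
  rw [one_div, inv_mul_eq_div, le_div_iff₀ hD]
  rw [div_mul_eq_mul_div, div_le_iff₀ (by positivity)]
  calc ((d-m).factorial * stirling2 (d+1) (d-m) : ℚ) * ((d + 1).factorial - ((d - m).factorial:ℚ))
      ≤ ((d-m).factorial * stirling2 (d+1) (d-m) : ℚ) * ((d + 1).factorial : ℚ) := by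
        apply mul_le_mul_of_nonneg_left hDle (by positivity)
    _ ≤ (∑ k ∈ Finset.range (m + 1), (fnum (d - m) (d - k + 1) : ℚ) * FratAux d k)
          * ((d + 1).factorial : ℚ) := by
        apply mul_le_mul_of_nonneg_right hterm (by positivity)

lemma FratAux_upper (d : ℕ) : ∀ m, m ≤ d →
    FratAux d m ≤ ((d-m+1).factorial * stirling2 (d+1) (d-m+1) * 2^m : ℚ) / ((d+1).factorial : ℚ) := by
  intro m
  induction m using Nat.strong_induction_on with
  | _ m ih =>
    match m with
    | 0 =>
      intro _
      rw [show FratAux d 0 = 1 from by rw [FratAux], show d-0+1 = d+1 from by omega, s2_self]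
      push_cast
      rw [pow_zero, mul_one, mul_one, div_self (by positivity)]
    | m' + 1 =>
      intro hm
      have h : m' < d := by omega
      have hD := denom_pos (d := d) (m := m') h
      set mm := d - m' with hmm
      have hmm1 : 1 ≤ mm := by omega
      -- the ℕ inequality from the Z-lemma
      have hZZ : (∑ k ∈ range (m'+1),
            stirling2 (d-k+1) mm * (d-k+1).factorial * stirling2 (d+1) (d-k+1) * 2^k)
            + mm.factorial * stirling2 (d+1) mm * 2^(m'+1)
          ≤ (d+1).factorial * stirling2 (d+1) mm * 2^(m'+1) := by
        set g : ℕ → ℕ := fun l => stirling2 l mm * l.factorial * stirling2 (d+1) l * 2^(d+1-l)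
          with hg
        have e1 : ∑ k ∈ range (m'+1),
              stirling2 (d-k+1) mm * (d-k+1).factorial * stirling2 (d+1) (d-k+1) * 2^k
            = ∑ k ∈ range (m'+1), g (d+1-k) := by
          refine Finset.sum_congr rfl fun k hk => ?_
          simp only [mem_range] at hk
          rw [hg]
          simp only
          rw [show d-k+1 = d+1-k from by omega, show d+1-(d+1-k) = k from by omega]
        have e2 : g mm = mm.factorial * stirling2 (d+1) mm * 2^(m'+1) := by
          rw [hg]; simp only
          rw [s2_self, show d+1-mm = m'+1 from by omega]
          ring
        have e3 : Zf (d+1) mm = ∑ k ∈ range (d+2), g (d+1-k) := by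
          rw [Zf, ← Finset.sum_range_reflect]
          refine Finset.sum_congr rfl fun k hk => ?_
          rw [show d+2-1-k = d+1-k from by omega]
        have e4 : ∑ k ∈ range (m'+2), g (d+1-k) ≤ ∑ k ∈ range (d+2), g (d+1-k) := by
          apply Finset.sum_le_sum_of_subset
          intro x hx
          simp only [mem_range] at *
          omega
        have e5 : ∑ k ∈ range (m'+2), g (d+1-k)
            = (∑ k ∈ range (m'+1), g (d+1-k)) + g mm := by
          rw [Finset.sum_range_succ, show d+1-(m'+1) = mm from by omega]
        have e6 := Zf_le (d+1) mm hmm1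
        rw [show d+1-mm = m'+1 from by omega] at e6
        calc (∑ k ∈ range (m'+1),
              stirling2 (d-k+1) mm * (d-k+1).factorial * stirling2 (d+1) (d-k+1) * 2^k)
              + mm.factorial * stirling2 (d+1) mm * 2^(m'+1)
            = ∑ k ∈ range (m'+2), g (d+1-k) := by rw [e5, e1, e2]
          _ ≤ ∑ k ∈ range (d+2), g (d+1-k) := e4
          _ = Zf (d+1) mm := e3.symm
          _ ≤ (d+1).factorial * stirling2 (d+1) mm * 2^(m'+1) := e6
      -- bound the sum in ℚ
      have hsum : ∑ k ∈ Finset.range (m' + 1), (fnum mm (d - k + 1) : ℚ) * FratAux d k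
          ≤ (((d + 1).factorial : ℚ) - (mm.factorial : ℚ))
            * ((mm.factorial * stirling2 (d+1) mm * 2^(m'+1) : ℚ) / ((d+1).factorial : ℚ)) := by
        have hterm : ∀ k ∈ Finset.range (m'+1), (fnum mm (d - k + 1) : ℚ) * FratAux d k
            ≤ (mm.factorial : ℚ) *
              ((stirling2 (d-k+1) mm * (d-k+1).factorial * stirling2 (d+1) (d-k+1) * 2^k : ℕ) : ℚ)
                / ((d+1).factorial : ℚ) := by
          intro k hk
          simp only [mem_range] at hk
          have hik := ih k (by omega) (by omega)
          have hfnum : ((fnum mm (d - k + 1) : ℕ) : ℚ)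
              = (mm.factorial : ℚ) * (stirling2 (d-k+1) mm : ℚ) := by
            rw [fnum]; push_cast; ring
          calc (fnum mm (d - k + 1) : ℚ) * FratAux d k
              ≤ (fnum mm (d - k + 1) : ℚ)
                 * (((d-k+1).factorial * stirling2 (d+1) (d-k+1) * 2^k : ℚ) / ((d+1).factorial : ℚ)) := by
                apply mul_le_mul_of_nonneg_left _ (by positivity)
                exact hik
            _ = (mm.factorial : ℚ) *
              ((stirling2 (d-k+1) mm * (d-k+1).factorial * stirling2 (d+1) (d-k+1) * 2^k : ℕ) : ℚ)
                / ((d+1).factorial : ℚ) := by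
                rw [hfnum]; push_cast; ring
        calc ∑ k ∈ Finset.range (m' + 1), (fnum mm (d - k + 1) : ℚ) * FratAux d k
            ≤ ∑ k ∈ Finset.range (m'+1), (mm.factorial : ℚ) *
              ((stirling2 (d-k+1) mm * (d-k+1).factorial * stirling2 (d+1) (d-k+1) * 2^k : ℕ) : ℚ)
                / ((d+1).factorial : ℚ) := Finset.sum_le_sum hterm
          _ = (mm.factorial : ℚ) * (((∑ k ∈ range (m'+1),
                stirling2 (d-k+1) mm * (d-k+1).factorial * stirling2 (d+1) (d-k+1) * 2^k : ℕ)) : ℚ)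
                / ((d+1).factorial : ℚ) := by
              rw [← Finset.sum_div, ← Finset.mul_sum]
              push_cast
              ring
          _ ≤ (((d + 1).factorial : ℚ) - (mm.factorial : ℚ))
            * ((mm.factorial * stirling2 (d+1) mm * 2^(m'+1) : ℚ) / ((d+1).factorial : ℚ)) := by
              rw [div_le_iff₀ (by positivity)]
              have hcast : ((∑ k ∈ range (m'+1),
                  stirling2 (d-k+1) mm * (d-k+1).factorial * stirling2 (d+1) (d-k+1) * 2^k : ℕ) : ℚ)
                  ≤ ((d+1).factorial : ℚ) * (stirling2 (d+1) mm : ℚ) * 2^(m'+1)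
                    - (mm.factorial : ℚ) * (stirling2 (d+1) mm : ℚ) * 2^(m'+1) := by
                have := hZZ
                have hc : ((∑ k ∈ range (m'+1),
                    stirling2 (d-k+1) mm * (d-k+1).factorial * stirling2 (d+1) (d-k+1) * 2^k)
                    + mm.factorial * stirling2 (d+1) mm * 2^(m'+1) : ℚ)
                    ≤ ((d+1).factorial * stirling2 (d+1) mm * 2^(m'+1) : ℚ) := by
                  exact_mod_cast this
                push_cast at hc ⊢
                linarith
              have hfl : (1:ℚ) ≤ (mm.factorial : ℚ) := by
                exact_mod_cast Nat.one_le_iff_ne_zero.mpr (Nat.factorial_ne_zero mm)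
              have hnn : (0:ℚ) ≤ (stirling2 (d+1) mm : ℚ) * 2^(m'+1) := by positivity
              calc (mm.factorial : ℚ) * (((∑ k ∈ range (m'+1),
                  stirling2 (d-k+1) mm * (d-k+1).factorial * stirling2 (d+1) (d-k+1) * 2^k : ℕ)) : ℚ)
                  ≤ (mm.factorial : ℚ) * (((d+1).factorial : ℚ) * (stirling2 (d+1) mm : ℚ) * 2^(m'+1)
                    - (mm.factorial : ℚ) * (stirling2 (d+1) mm : ℚ) * 2^(m'+1)) := by
                    apply mul_le_mul_of_nonneg_left hcast (by positivity)
                _ = (((d + 1).factorial : ℚ) - (mm.factorial : ℚ))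
                    * ((mm.factorial : ℚ) * (stirling2 (d+1) mm : ℚ) * 2^(m'+1)) := by ring
                _ = ((d + 1).factorial - (mm.factorial : ℚ))
                    * ((mm.factorial * stirling2 (d+1) mm * 2^(m'+1) : ℚ)) := by push_cast; ring
                _ = ((d + 1).factorial - (mm.factorial : ℚ))
                    * ((mm.factorial * stirling2 (d+1) mm * 2^(m'+1) : ℚ) / ((d+1).factorial : ℚ))
                    * ((d+1).factorial : ℚ) := by
                    field_simp
      rw [FratAux_succ d m' h, show d - (m'+1) + 1 = mm from by omega]
      rw [one_div, inv_mul_eq_div, div_le_iff₀ hD]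
      calc ∑ k ∈ Finset.range (m' + 1), (fnum (d - m') (d - k + 1) : ℚ) * FratAux d k
          ≤ (((d + 1).factorial : ℚ) - (mm.factorial : ℚ))
            * ((mm.factorial * stirling2 (d+1) mm * 2^(m'+1) : ℚ) / ((d+1).factorial : ℚ)) := hsum
        _ = (mm.factorial * stirling2 (d+1) mm * 2^(m'+1) : ℚ) / ((d+1).factorial : ℚ)
            * (((d + 1).factorial : ℚ) - ((d-m').factorial : ℚ)) := by rw [← hmm]; ring

lemma FratAux_top {d : ℕ} (hd : 1 ≤ d) :
    FratAux d d = (1 / (((d + 1).factorial : ℚ) - 1)) * ∑ k ∈ range d, FratAux d k := by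
  obtain ⟨m', rfl⟩ : ∃ m', d = m' + 1 := ⟨d - 1, by omega⟩
  rw [FratAux_succ (m'+1) m' (by omega)]
  rw [show m'+1-m' = 1 from by omega]
  rw [show (Nat.factorial 1 : ℚ) = 1 from by norm_num]
  congr 1
  refine Finset.sum_congr rfl fun k hk => ?_
  simp only [mem_range] at hk
  rw [fnum, show m'+1-k+1 = (m'-k+1)+1 from by omega, s2_one]
  push_cast
  norm_num

lemma sum_eq_fub (d : ℕ) :
    (∑ k ∈ range d, (d-k+1).factorial * stirling2 (d+1) (d-k+1)) + 1 = fub (d+1) := by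
  have h1 : fub (d+1) = (∑ i ∈ range d, (i+2).factorial * stirling2 (d+1) (i+2)) + 1 := by
    rw [fub]
    rw [Finset.sum_range_succ' (fun j => j.factorial * stirling2 (d+1) j) (d+1)]
    rw [s2_succ_zero, mul_zero, add_zero]
    rw [Finset.sum_range_succ' (fun i => (i+1).factorial * stirling2 (d+1) (i+1)) d]
    rw [show (0:ℕ)+1 = 1 from rfl, s2_one, Nat.factorial_one, one_mul]
  rw [h1]
  congr 1
  rw [← Finset.sum_range_reflect (fun i => (i+2).factorial * stirling2 (d+1) (i+2)) d]
  refine Finset.sum_congr rfl fun k hk => ?_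
  simp only [mem_range] at hk
  rw [show d-1-k+2 = d-k+1 from by omega]

lemma F0_lower {d : ℕ} (hd : 1 ≤ d) :
    ((fub (d+1) : ℚ) - 1) / (((d+1).factorial : ℚ) * (((d+1).factorial : ℚ) - 1))
      ≤ FratAux d d := by
  have hD : (0:ℚ) < ((d+1).factorial : ℚ) - 1 := by
    have : 1 < (d+1).factorial := Nat.one_lt_factorial.mpr (by omega)
    have : (1:ℚ) < ((d+1).factorial : ℚ) := by exact_mod_cast this
    linarith
  have hL : (0:ℚ) < ((d+1).factorial : ℚ) := by positivity
  have hsum : ((fub (d+1) : ℚ) - 1) / ((d+1).factorial : ℚ)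
      ≤ ∑ k ∈ range d, FratAux d k := by
    have hterm : ∀ k ∈ range d,
        ((d-k+1).factorial * stirling2 (d+1) (d-k+1) : ℚ) / ((d+1).factorial : ℚ)
          ≤ FratAux d k := by
      intro k hk
      simp only [mem_range] at hk
      match k with
      | 0 =>
        rw [show FratAux d 0 = 1 from by rw [FratAux], show d-0+1 = d+1 from by omega, s2_self]
        push_cast
        rw [mul_one, div_self (by positivity)]
      | k' + 1 =>
        have := FratAux_lower (d := d) (m := k') (by omega)
        rwa [show d-k' = d-(k'+1)+1 from by omega] at this
    calc ((fub (d+1) : ℚ) - 1) / ((d+1).factorial : ℚ)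
        = ∑ k ∈ range d, ((d-k+1).factorial * stirling2 (d+1) (d-k+1) : ℚ) / ((d+1).factorial : ℚ) := by
          rw [← Finset.sum_div]
          congr 1
          have := sum_eq_fub d
          have hc : ((∑ k ∈ range d, (d-k+1).factorial * stirling2 (d+1) (d-k+1) : ℕ) : ℚ) + 1
              = ((fub (d+1) : ℕ) : ℚ) := by exact_mod_cast congrArg (Nat.cast : ℕ → ℚ) this
          push_cast at hc ⊢
          linarith
      _ ≤ ∑ k ∈ range d, FratAux d k := Finset.sum_le_sum hterm
  rw [FratAux_top hd, one_div, inv_mul_eq_div, le_div_iff₀ hD, div_mul_eq_mul_div,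
    div_le_iff₀ (by positivity : (0:ℚ) < ((d+1).factorial : ℚ) * (((d+1).factorial : ℚ) - 1))]
  calc ((fub (d+1) : ℚ) - 1) * (((d+1).factorial : ℚ) - 1)
      = (((fub (d+1) : ℚ) - 1) / ((d+1).factorial : ℚ)) * (((d+1).factorial : ℚ) - 1)
        * ((d+1).factorial : ℚ) := by field_simp
    _ ≤ (∑ k ∈ range d, FratAux d k) * (((d+1).factorial : ℚ) - 1) * ((d+1).factorial : ℚ) := by
        apply mul_le_mul_of_nonneg_right _ (le_of_lt hL)
        apply mul_le_mul_of_nonneg_right hsum (le_of_lt hD)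
    _ = (∑ k ∈ range d, FratAux d k) * (((d+1).factorial : ℚ) * (((d+1).factorial : ℚ) - 1)) := by
        ring

lemma F0_upper (d : ℕ) : FratAux d d ≤ (2^d : ℚ) / ((d+1).factorial : ℚ) := by
  have := FratAux_upper d d (le_refl d)
  rw [show d-d+1 = 1 from by omega, Nat.factorial_one, s2_one] at this
  calc FratAux d d ≤ ((1:ℕ) * (1:ℕ) * 2^d : ℚ) / ((d+1).factorial : ℚ) := by
        convert this using 3 <;> norm_num
    _ = (2^d : ℚ) / ((d+1).factorial : ℚ) := by norm_num

noncomputable def bseq (n : ℕ) : ℝ := (fub n : ℝ) / (n.factorial : ℝ)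

lemma bseq_zero : bseq 0 = 1 := by
  rw [bseq, show fub 0 = 1 from rfl]
  norm_num

lemma bseq_rec (n : ℕ) :
    bseq (n+1) = ∑ i ∈ range (n+1), bseq (n-i) / ((i+1).factorial : ℝ) := by
  rw [bseq, fub_comp]
  push_cast
  rw [Finset.sum_div]
  refine Finset.sum_congr rfl fun i hi => ?_
  simp only [mem_range] at hi
  rw [bseq]
  have hch := Nat.choose_mul_factorial_mul_factorial (show i+1 ≤ n+1 by omega)
  rw [show n+1-(i+1) = n-i from by omega] at hch
  have hc : ((n+1).choose (i+1) : ℝ) * ((i+1).factorial : ℝ) * ((n-i).factorial : ℝ)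
      = ((n+1).factorial : ℝ) := by exact_mod_cast congrArg (Nat.cast : ℕ → ℝ) hch
  have h1 : ((i+1).factorial : ℝ) ≠ 0 := by positivity
  have h2 : ((n-i).factorial : ℝ) ≠ 0 := by positivity
  have h3 : ((n+1).factorial : ℝ) ≠ 0 := by positivity
  field_simp
  nlinarith [hc]

lemma bseq_nonneg (n : ℕ) : 0 ≤ bseq n := by
  rw [bseq]; positivity

lemma bseq_one_le : ∀ n, 1 ≤ bseq n := by
  intro n
  induction n with
  | zero => rw [bseq_zero]
  | succ n ih =>
    rw [bseq_rec]
    have h0 : (1:ℝ) ≤ bseq (n-0) / ((0+1).factorial : ℝ) := by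
      norm_num
      exact ih
    calc (1:ℝ) ≤ bseq (n-0) / ((0+1).factorial : ℝ) := h0
      _ ≤ ∑ i ∈ range (n+1), bseq (n-i) / ((i+1).factorial : ℝ) := by
          apply Finset.single_le_sum (f := fun i => bseq (n-i) / ((i+1).factorial : ℝ))
          · intro i hi
            have := bseq_nonneg (n-i)
            positivity
          · simp

lemma bseq_mono : ∀ m n : ℕ, m ≤ n → bseq m ≤ bseq n := by
  have step : ∀ n, bseq n ≤ bseq (n+1) := by
    intro n
    rw [bseq_rec]
    have h0 : bseq n ≤ bseq (n-0) / ((0+1).factorial : ℝ) := by norm_num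
    calc bseq n ≤ bseq (n-0) / ((0+1).factorial : ℝ) := h0
      _ ≤ ∑ i ∈ range (n+1), bseq (n-i) / ((i+1).factorial : ℝ) := by
          apply Finset.single_le_sum (f := fun i => bseq (n-i) / ((i+1).factorial : ℝ))
          · intro i hi
            have := bseq_nonneg (n-i)
            positivity
          · simp
  intro m n h
  induction n with
  | zero => simp at h; rw [h]
  | succ n ih =>
    rcases Nat.lt_or_ge m (n+1) with h' | h'
    · exact le_trans (ih (by omega)) (step n)
    · rw [show m = n+1 from by omega]

lemma bseq_lower3 (n : ℕ) (hn : 2 ≤ n) :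
    bseq n + bseq (n-1)/2 + bseq (n-2)/6 ≤ bseq (n+1) := by
  rw [bseq_rec]
  have hsub : (range 3) ⊆ range (n+1) := by
    intro x hx; simp only [mem_range] at *; omega
  calc bseq n + bseq (n-1)/2 + bseq (n-2)/6
      = ∑ i ∈ range 3, bseq (n-i) / ((i+1).factorial : ℝ) := by
        rw [Finset.sum_range_succ, Finset.sum_range_succ, Finset.sum_range_succ,
          Finset.sum_range_zero]
        norm_num [Nat.factorial]
    _ ≤ ∑ i ∈ range (n+1), bseq (n-i) / ((i+1).factorial : ℝ) := by
        apply Finset.sum_le_sum_of_subset_of_nonneg hsub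
        intro i _ _
        have := bseq_nonneg (n-i)
        positivity

lemma fact_ge_aux (p : ℕ) : 6 * 4^p ≤ (p+3).factorial := by
  induction p with
  | zero => decide
  | succ p ih =>
    rw [pow_succ, Nat.factorial_succ]
    calc 6 * (4^p * 4) = (6*4^p) * 4 := by ring
      _ ≤ (p+3).factorial * (p+4) := Nat.mul_le_mul ih (by omega)
      _ = (p+4) * (p+3).factorial := by ring

lemma tail_sum_le (n : ℕ) : ∑ i ∈ Finset.Ico 2 n, (1:ℝ) / ((i+1).factorial : ℝ) ≤ 2/9 := by
  rcases Nat.lt_or_ge n 2 with h | h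
  · rw [Finset.Ico_eq_empty (by omega)]
    norm_num
  obtain ⟨p, rfl⟩ : ∃ p, n = p + 2 := ⟨n - 2, by omega⟩
  have key : ∀ p : ℕ, ∑ i ∈ Finset.Ico 2 (p+2), (1:ℝ) / ((i+1).factorial : ℝ)
      ≤ 2/9 - (2/9) * (1/4)^p := by
    intro p
    induction p with
    | zero => rw [Finset.Ico_eq_empty (by omega)]; norm_num
    | succ p ih =>
      rw [Finset.sum_Ico_succ_top (by omega)]
      have h1 : (1:ℝ) / ((p+2+1).factorial : ℝ) ≤ (1/6) * (1/4)^p := by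
        rw [show p+2+1 = p+3 from by omega]
        have h2 : (6 * 4^p : ℝ) ≤ ((p+3).factorial : ℝ) := by exact_mod_cast fact_ge_aux p
        have h3 := one_div_le_one_div_of_le (show (0:ℝ) < 6*4^p by positivity) h2
        have h4 : ((1:ℝ)/4)^p = 1/4^p := by rw [one_div, inv_pow, one_div]
        calc (1:ℝ)/((p+3).factorial : ℝ) ≤ 1/(6*4^p) := h3
          _ = (1/6) * (1/4)^p := by rw [h4, div_mul_div_comm]; norm_num
      have h5 : ((1:ℝ)/4)^(p+1) = (1/4)^p * (1/4) := by rw [pow_succ]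
      linarith
  calc ∑ i ∈ Finset.Ico 2 (p+2), (1:ℝ) / ((i+1).factorial : ℝ) ≤ 2/9 - (2/9)*(1/4)^p := key p
    _ ≤ 2/9 := by
      have : (0:ℝ) ≤ (2/9)*(1/4)^p := by positivity
      linarith

lemma bseq_upper3 (n : ℕ) (hn : 3 ≤ n) :
    bseq (n+1) ≤ bseq n + bseq (n-1)/2 + (2/9) * bseq (n-2) := by
  rw [bseq_rec]
  have hsplit : ∑ i ∈ range (n+1), bseq (n-i) / ((i+1).factorial : ℝ)
      = (∑ i ∈ Finset.Ico 0 2, bseq (n-i) / ((i+1).factorial : ℝ))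
        + ∑ i ∈ Finset.Ico 2 (n+1), bseq (n-i) / ((i+1).factorial : ℝ) := by
    rw [Finset.range_eq_Ico,
      ← Finset.sum_Ico_consecutive _ (by omega : 0 ≤ 2) (by omega : 2 ≤ n+1)]
  rw [hsplit]
  have hhead : ∑ i ∈ Finset.Ico 0 2, bseq (n-i) / ((i+1).factorial : ℝ)
      = bseq n + bseq (n-1)/2 := by
    rw [show Finset.Ico 0 2 = Finset.range 2 from by rw [Finset.range_eq_Ico]]
    rw [Finset.sum_range_succ, Finset.sum_range_succ, Finset.sum_range_zero]
    norm_num [Nat.factorial]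
  rw [hhead]
  have htail : ∑ i ∈ Finset.Ico 2 (n+1), bseq (n-i) / ((i+1).factorial : ℝ)
      ≤ (2/9) * bseq (n-2) := by
    calc ∑ i ∈ Finset.Ico 2 (n+1), bseq (n-i) / ((i+1).factorial : ℝ)
        ≤ ∑ i ∈ Finset.Ico 2 (n+1), bseq (n-2) * (1 / ((i+1).factorial : ℝ)) := by
          apply Finset.sum_le_sum
          intro i hi
          simp only [Finset.mem_Ico] at hi
          have h1 : bseq (n-i) ≤ bseq (n-2) := bseq_mono _ _ (by omega)
          have h2 : (0:ℝ) < ((i+1).factorial : ℝ) := by positivity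
          rw [div_le_iff₀ h2, mul_assoc, one_div, inv_mul_cancel₀ (ne_of_gt h2), mul_one]
          exact h1
      _ = bseq (n-2) * ∑ i ∈ Finset.Ico 2 (n+1), (1 / ((i+1).factorial : ℝ)) := by
          rw [Finset.mul_sum]
      _ ≤ bseq (n-2) * (2/9) := by
          apply mul_le_mul_of_nonneg_left (tail_sum_le (n+1)) (bseq_nonneg (n-2))
      _ = (2/9) * bseq (n-2) := by ring
  linarith

lemma fub_one : fub 1 = 1 := by decide
lemma fub_two : fub 2 = 3 := by decide
lemma fub_three : fub 3 = 13 := by decide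
lemma fub_four : fub 4 = 75 := by decide

lemma bseq_ratio : ∀ n, 2 ≤ n → Real.sqrt 2 * bseq (n-1) ≤ bseq n := by
  have hs2 : Real.sqrt 2 ^ 2 = 2 := Real.sq_sqrt (by norm_num)
  have hs0 : (0:ℝ) ≤ Real.sqrt 2 := Real.sqrt_nonneg 2
  have hs32 : Real.sqrt 2 ≤ 3/2 := by nlinarith
  have hs1 : 1 ≤ Real.sqrt 2 := by nlinarith
  have hs107 : Real.sqrt 2 ≤ 10/7 := by nlinarith
  have hs43 : 4/3 ≤ Real.sqrt 2 := by nlinarith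
  intro n
  induction n using Nat.strong_induction_on with
  | _ n ih =>
    intro hn
    match n, hn with
    | 2, _ => 
      have e1 : bseq 1 = 1 := by rw [bseq, fub_one]; norm_num
      have e2 : bseq 2 = 3/2 := by rw [bseq, fub_two]; norm_num [Nat.factorial]
      rw [show (2:ℕ)-1 = 1 from rfl, e1, e2]
      linarith
    | 3, _ =>
      have e2 : bseq 2 = 3/2 := by rw [bseq, fub_two]; norm_num [Nat.factorial]
      have e3 : bseq 3 = 13/6 := by rw [bseq, fub_three]; norm_num [Nat.factorial]
      rw [show (3:ℕ)-1 = 2 from rfl, e2, e3]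
      nlinarith
    | 4, _ =>
      have e3 : bseq 3 = 13/6 := by rw [bseq, fub_three]; norm_num [Nat.factorial]
      have e4 : bseq 4 = 25/8 := by rw [bseq, fub_four]; norm_num [Nat.factorial]
      rw [show (4:ℕ)-1 = 3 from rfl, e3, e4]
      nlinarith
    | (n+5), _ =>
      set N := n + 5 with hN
      have h5 : 5 ≤ N := by omega
      have hlow : bseq (N-1) + bseq (N-2)/2 + bseq (N-3)/6 ≤ bseq N := by
        have := bseq_lower3 (N-1) (by omega)
        rw [show N-1+1 = N from by omega, show N-1-1 = N-2 from by omega,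
          show N-1-2 = N-3 from by omega] at this
        exact this
      have hup : bseq (N-1) ≤ bseq (N-2) + bseq (N-3)/2 + (2/9) * bseq (N-4) := by
        have := bseq_upper3 (N-2) (by omega)
        rw [show N-2+1 = N-1 from by omega, show N-2-1 = N-3 from by omega,
          show N-2-2 = N-4 from by omega] at this
        exact this
      have h3 : Real.sqrt 2 * bseq (N-3) ≤ bseq (N-2) := by
        have := ih (N-2) (by omega) (by omega)
        rwa [show N-2-1 = N-3 from by omega] at this
      have h4 : Real.sqrt 2 * bseq (N-4) ≤ bseq (N-3) := by
        have := ih (N-3) (by omega) (by omega)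
        rwa [show N-3-1 = N-4 from by omega] at this
      have w1 := bseq_nonneg (N-1)
      have w2 := bseq_nonneg (N-2)
      have w3 := bseq_nonneg (N-3)
      have w4 := bseq_nonneg (N-4)
      have e4 : 2 * bseq (N-4) ≤ bseq (N-2) := by
        nlinarith [mul_le_mul_of_nonneg_left h4 hs0]
      have e3 : bseq (N-3) ≤ (Real.sqrt 2/2) * bseq (N-2) := by
        nlinarith [mul_le_mul_of_nonneg_left h3 hs0]
      have e2 : (Real.sqrt 2 - 1) * bseq (N-1)
          ≤ (Real.sqrt 2 - 1) * (bseq (N-2) + bseq (N-3)/2 + (2/9) * bseq (N-4)) :=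
        mul_le_mul_of_nonneg_left hup (by linarith)
      have e5 : (Real.sqrt 2/2 - 2/3) * bseq (N-3)
          ≤ (Real.sqrt 2/2 - 2/3) * ((Real.sqrt 2/2) * bseq (N-2)) :=
        mul_le_mul_of_nonneg_left e3 (by nlinarith)
      have e6 : (Real.sqrt 2 - 1) * (2 * bseq (N-4))
          ≤ (Real.sqrt 2 - 1) * bseq (N-2) :=
        mul_le_mul_of_nonneg_left e4 (by linarith)
      nlinarith [e2, e5, e6, hlow, hs2]

lemma bseq_geom : ∀ n, 1 ≤ n → Real.sqrt 2 ^ (n-1) ≤ bseq n := by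
  intro n
  induction n with
  | zero => omega
  | succ n ih =>
    intro _
    rcases Nat.eq_zero_or_pos n with rfl | hn
    · rw [pow_zero]; exact bseq_one_le 1
    have h1 := bseq_ratio (n+1) (by omega)
    rw [show n+1-1 = n from by omega] at h1
    have h2 := ih hn
    have hs0 : (0:ℝ) ≤ Real.sqrt 2 := Real.sqrt_nonneg 2
    calc Real.sqrt 2 ^ (n+1-1) = Real.sqrt 2 * Real.sqrt 2 ^ (n-1) := by
          rw [show n+1-1 = (n-1)+1 from by omega, pow_succ]; ring
      _ ≤ Real.sqrt 2 * bseq n := mul_le_mul_of_nonneg_left h2 hs0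
      _ ≤ bseq (n+1) := h1

lemma fub_lower (n : ℕ) (hn : 1 ≤ n) :
    Real.sqrt 2 ^ (n-1) * (n.factorial : ℝ) ≤ (fub n : ℝ) := by
  have h := bseq_geom n hn
  rw [bseq] at h
  have hf : (0:ℝ) < (n.factorial : ℝ) := by positivity
  rw [le_div_iff₀ hf] at h
  exact h

lemma Hcoef_eq (d : ℕ) (hd : 1 ≤ d) : Hcoef d 1 = FratAux d d := by
  have hX : (X - 1 : ℚ[X]) = X + Polynomial.C (-1 : ℚ) := by
    rw [map_neg, map_one]
    ring
  rw [Hcoef, Hpoly, Fpoly]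
  rw [show d + 1 - 1 = d from by omega]
  have hcomp : (∑ t ∈ Finset.range (d + 2), C (Frat d t) * X ^ (d + 1 - t)).comp (X - 1)
      = ∑ t ∈ Finset.range (d + 2), C (Frat d t) * (X - 1) ^ (d + 1 - t) := by
    rw [Polynomial.comp, Polynomial.eval₂_finset_sum]
    refine Finset.sum_congr rfl fun t ht => ?_
    rw [← Polynomial.comp, Polynomial.mul_comp, Polynomial.C_comp, Polynomial.X_pow_comp]
  rw [hcomp, Polynomial.finset_sum_coeff]
  have hterm : ∀ t, (C (Frat d t) * (X - 1) ^ (d + 1 - t)).coeff d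
      = Frat d t * ((-1:ℚ)^(d+1-t-d) * ((d+1-t).choose d : ℚ)) := by
    intro t
    rw [Polynomial.coeff_C_mul, hX, Polynomial.coeff_X_add_C_pow]
  have hzero : ∀ t ∈ Finset.range (d+2), t ≠ 1
      → (C (Frat d t) * (X - 1) ^ (d + 1 - t)).coeff d = 0 := by
    intro t ht hne
    simp only [mem_range] at ht
    rw [hterm]
    rcases Nat.eq_zero_or_pos t with rfl | htpos
    · have : Frat d 0 = 0 := by
        rw [Frat, show d + 1 - 0 = d + 1 from rfl, FratAux, if_pos (le_refl d)]
      rw [this, zero_mul]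
    · have h2 : 2 ≤ t := by omega
      have : (d+1-t).choose d = 0 := Nat.choose_eq_zero_of_lt (by omega)
      rw [this]
      push_cast
      ring
  rw [Finset.sum_eq_single_of_mem 1 (by simp only [mem_range]; omega) hzero]
  rw [hterm, Frat, show d+1-1 = d from by omega, show d - d = 0 from by omega]
  rw [pow_zero, Nat.choose_self]
  norm_num


theorem main_lower (d : ℕ) (hd : 1 ≤ d) :
    Real.sqrt 2 ^ d / (((d + 1).factorial : ℝ) * d) ≤ ((FratAux d d : ℚ) : ℝ) := by
  have hq := F0_lower (d := d) hd
  have hr := (Rat.cast_le (K := ℝ)).mpr hq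
  push_cast at hr
  set L : ℝ := ((d+1).factorial : ℝ) with hL
  set A : ℝ := ((fub (d+1) : ℕ) : ℝ) with hA'
  set p : ℝ := Real.sqrt 2 ^ d with hp'
  have hL2 : (2:ℝ) ≤ L := by
    rw [hL]
    have : 2 ≤ (d+1).factorial := by
      calc 2 = (1+1).factorial := by decide
        _ ≤ (d+1).factorial := Nat.factorial_le (by omega)
    exact_mod_cast this
  have hdR : (1:ℝ) ≤ (d:ℝ) := by exact_mod_cast hd
  have hdpos : (0:ℝ) < (d:ℝ) := lt_of_lt_of_le one_pos hdR
  have hp1 : (1:ℝ) ≤ p := one_le_pow₀ (by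
    nlinarith [Real.sq_sqrt (show (0:ℝ) ≤ 2 by norm_num), Real.sqrt_nonneg 2])
  have hA : p * L ≤ A := by
    have := fub_lower (d+1) (by omega)
    rw [show d+1-1 = d from by omega] at this
    rw [hA', hp', hL]
    linarith [this]
  have hLd : (0:ℝ) < L * d := by positivity
  have hLL1 : (0:ℝ) < L * (L - 1) := by nlinarith
  have key : p * (L * (L - 1)) ≤ (A - 1) * (L * d) := by
    have c1 : (p*L - 1) * (L*(d:ℝ)) ≤ (A-1)*(L*(d:ℝ)) :=
      mul_le_mul_of_nonneg_right (by linarith) (le_of_lt hLd)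
    have c2 : p * (L * (L - 1)) ≤ (p*L - 1) * (L*(d:ℝ)) := by
      have t1 : (0:ℝ) ≤ p*L - 2 := by nlinarith
      have t2 : (0:ℝ) ≤ L * ((d:ℝ) - 1) := by nlinarith
      have t3 : (0:ℝ) ≤ (p*L - 2) * (L * ((d:ℝ) - 1)) := mul_nonneg t1 t2
      nlinarith [t3, hp1, hL2, hdR]
    linarith
  rw [div_le_iff₀ hLd]
  rw [div_le_iff₀ hLL1] at hr
  calc p ≤ (A - 1) * (L * (d:ℝ)) / (L * (L-1)) := by
        rw [le_div_iff₀ hLL1]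
        exact key
    _ = (A - 1) / (L * (L-1)) * (L * (d:ℝ)) := by ring
    _ ≤ ((FratAux d d : ℚ) : ℝ) * (L * (d:ℝ)) := by
        apply mul_le_mul_of_nonneg_right _ (le_of_lt hLd)
        rw [div_le_iff₀ hLL1]
        exact hr

theorem main_upper (d : ℕ) :
    ((FratAux d d : ℚ) : ℝ) ≤ 2 ^ (d + 1) / (((d + 1).factorial : ℝ)) := by
  have hq := F0_upper d
  have hr := (Rat.cast_le (K := ℝ)).mpr hq
  push_cast at hr
  have hL : (0:ℝ) < ((d+1).factorial : ℝ) := by positivity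
  have h2 : (2:ℝ)^d ≤ 2^(d+1) := by
    rw [pow_succ]
    nlinarith [pow_pos (show (0:ℝ) < 2 by norm_num) d]
  calc ((FratAux d d : ℚ) : ℝ) ≤ 2^d / ((d+1).factorial : ℝ) := hr
    _ ≤ 2^(d+1) / ((d+1).factorial : ℝ) := by
        gcongr
        
end StmtAux

/-- For `d ≥ 1`: `√2^d / ((d+1)!·d) ≤ H_{1,d} ≤ 2^{d+1} / (d+1)!`. -/
theorem stmt14 (d : ℕ) (hd : 1 ≤ d) :
    Real.sqrt 2 ^ d / (((d + 1).factorial : ℝ) * d) ≤ (Hcoef d 1 : ℝ) ∧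
      (Hcoef d 1 : ℝ) ≤ 2 ^ (d + 1) / ((d + 1).factorial : ℝ) := by
  rw [StmtAux.Hcoef_eq d hd]
  exact ⟨StmtAux.main_lower d hd, StmtAux.main_upper d⟩
end

section
/- For each fixed i with 0 ≤ i ≤ d, the number f_i^{Δ^{(k)}} of i-simplices of the k-fold barycentric subdivision of a d-dimensional abstract simplicial complex Δ can be written as f_i^{Δ^{(k)}} = Σ_{j=0}^{d-i} C_{j,i} · ((d+1-j)!)^k for rational constants C_{j,i}, with leading constant C_{0,i} = f_d^Δ · F_{i,d}; in particular f_i^{Δ^{(k)}} = f_d^Δ F_{i,d} (d+1)!^k + O(d!^k) as k → ∞. -/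
open Polynomial

/-- An iterated vertex type: `Tower V k` is the vertex type of the `k`-fold
barycentric subdivision of a complex with vertices in `V`. -/
def Tower (V : Type) : ℕ → Type
  | 0 => V
  | k + 1 => Finset (Tower V k)

instance towerDecEq (V : Type) [DecidableEq V] : ∀ k, DecidableEq (Tower V k)
  | 0 => inferInstanceAs (DecidableEq V)
  | k + 1 => letI := towerDecEq V k; inferInstanceAs (DecidableEq (Finset (Tower V k)))

/-- The barycentric subdivision of a finite abstract simplicial complex
(given as a finite family of finite simplices, containing `∅`): its simplices are the
chains of nonempty simplices of `Δ`, together with `∅`. -/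
def bary {W : Type} [DecidableEq W] (Δ : Finset (Finset W)) : Finset (Finset (Finset W)) :=
  Δ.powerset.filter fun c =>
    (∅ : Finset W) ∉ c ∧ ∀ σ ∈ c, ∀ τ ∈ c, σ ⊆ τ ∨ τ ⊆ σ

/-- The `k`-fold iterated barycentric subdivision. -/
def iterBary {V : Type} [DecidableEq V] (Δ : Finset (Finset V)) :
    (k : ℕ) → Finset (Finset (Tower V k))
  | 0 => Δ
  | k + 1 => bary (iterBary Δ k)

/-- `fcount Δ i` is the number of `i`-simplices (simplices with `i+1` vertices) of `Δ`. -/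
def fcount {W : Type} [DecidableEq W] (Δ : Finset (Finset W)) (i : ℕ) : ℕ :=
  (Δ.filter fun σ => σ.card = i + 1).card

/-!
A chain of `t + 1` nonempty faces with top face an `m`-set is an ordered partition of that set
into `t + 1` blocks, so there are `fnum (t + 1) m = (t + 1)! S(m, t + 1)` of them. Hence one
subdivision acts on f-vectors by the upper triangular matrix `(fnum (i + 1) (j + 1))` with diagonal
entries `(i + 1)!`. Solving this recurrence downward from `f_d(Δ^{(k)}) = f_d (d + 1)!^k`, each
`f_i(Δ^{(k)})` is a combination of the `((d + 1 - l)!)^k` with `l ≤ d - i`, and the coefficient of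
`((d + 1)!)^k` obeys exactly the recurrence defining `F_{i,d}`.
-/

open Finset

theorem stirling2_eq_stirlingSecond : stirling2 = Nat.stirlingSecond := by
  funext n k
  induction n generalizing k with
  | zero => cases k <;> rfl
  | succ n ih => cases k <;> simp [stirling2, Nat.stirlingSecond_succ_succ, ih]

theorem fnum_of_lt {a b : ℕ} (h : b < a) : fnum a b = 0 := by
  simp [fnum, stirling2_eq_stirlingSecond, Nat.stirlingSecond_eq_zero_of_lt h]

theorem fnum_self (a : ℕ) : fnum a a = a.factorial := by
  simp [fnum, stirling2_eq_stirlingSecond, Nat.stirlingSecond_self]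

theorem fnum_one_succ (n : ℕ) : fnum 1 (n + 1) = 1 := by
  simp [fnum, stirling2_eq_stirlingSecond, Nat.stirlingSecond_one_right]

theorem fnum_zero_left (n : ℕ) : fnum 0 n = if n = 0 then 1 else 0 := by
  cases n <;> simp [fnum, stirling2_eq_stirlingSecond]

theorem fnum_succ_succ (t m : ℕ) :
    fnum (t + 1) (m + 1) = (t + 1) * (fnum (t + 1) m + fnum t m) := by
  simp only [fnum, stirling2_eq_stirlingSecond, Nat.stirlingSecond_succ_succ, Nat.factorial_succ]
  ring

/-- `fnum t n` counts surjections `[n] → [t]`; sorting by the preimage of everything but the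
last value gives this recurrence. -/
theorem sum_range_choose_mul_fnum (n t : ℕ) :
    ∑ m ∈ range n, n.choose m * fnum t m = fnum (t + 1) n := by
  induction n generalizing t with
  | zero => simp [fnum_of_lt]
  | succ n ih =>
    cases t with
    | zero => simp [fnum_zero_left, fnum_one_succ]
    | succ t =>
      have hshift : ∑ m ∈ range n, n.choose (m + 1) * fnum (t + 1) (m + 1)
          = fnum (t + 2) n + fnum (t + 1) n := by
        have := sum_range_succ' (fun m => n.choose m * fnum (t + 1) m) n
        rw [sum_range_succ, ih, Nat.choose_self, fnum_of_lt (Nat.succ_pos t)] at this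
        simpa using this.symm
      have hsucc : ∑ m ∈ range n, n.choose m * fnum (t + 1) (m + 1)
          = (t + 1) * (fnum (t + 2) n + fnum (t + 1) n) := by
        simp only [fnum_succ_succ, mul_add, sum_add_distrib, mul_left_comm _ (t + 1),
          ← mul_sum, ih]
      rw [sum_range_succ', fnum_of_lt (Nat.succ_pos t)]
      simp only [Nat.choose_succ_succ, add_mul, sum_add_distrib, hsucc, hshift,
        fnum_succ_succ (t + 1) n]
      ring

theorem sum_range_fnum_mul {R : Type*} [Semiring R] {i d : ℕ} (hi : i ≤ d) (g : ℕ → R) :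
    ∑ j ∈ range (d + 1), (fnum (i + 1) (j + 1) : R) * g j
      = (i + 1).factorial * g i + ∑ j ∈ Ioc i d, (fnum (i + 1) (j + 1) : R) * g j := by
  rw [← sum_range_add_sum_Ico _ (by omega : i ≤ d + 1), Ico_add_one_right_eq_Icc,
    Icc_eq_cons_Ioc hi, sum_cons, fnum_self, sum_eq_zero fun j hj => by
      rw [fnum_of_lt (by simpa using hj), Nat.cast_zero, zero_mul], zero_add]

theorem exists_max_of_chain {W : Type*} {c : Finset (Finset W)} (hne : c.Nonempty)
    (hch : ∀ x ∈ c, ∀ y ∈ c, x ⊆ y ∨ y ⊆ x) : ∃ τ ∈ c, ∀ x ∈ c, x ⊆ τ := by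
  obtain ⟨τ, hτ, hmax⟩ := exists_max_image c card hne
  refine ⟨τ, hτ, fun x hx => ?_⟩
  rcases hch x hx τ hτ with h | h
  · exact h
  · rw [eq_of_subset_of_card_le h (hmax x hx)]

section Subdivision

variable {W : Type} [DecidableEq W]

theorem mem_bary {Δ : Finset (Finset W)} {c : Finset (Finset W)} :
    c ∈ bary Δ ↔ c ⊆ Δ ∧ (∅ : Finset W) ∉ c ∧ ∀ σ ∈ c, ∀ τ ∈ c, σ ⊆ τ ∨ τ ⊆ σ := by
  simp only [bary, mem_filter, mem_powerset]

def chainsTop (σ : Finset W) (t : ℕ) : Finset (Finset (Finset W)) :=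
  (bary σ.powerset).filter fun c => σ ∈ c ∧ c.card = t

theorem mem_chainsTop {σ : Finset W} {t : ℕ} {c : Finset (Finset W)} :
    c ∈ chainsTop σ t ↔ (∀ x ∈ c, x ⊆ σ) ∧ (∅ : Finset W) ∉ c ∧
      (∀ x ∈ c, ∀ y ∈ c, x ⊆ y ∨ y ⊆ x) ∧ σ ∈ c ∧ c.card = t := by
  simp only [chainsTop, mem_filter, mem_bary, subset_iff, mem_powerset, and_assoc]

theorem chainsTop_disjoint {σ σ' : Finset W} (h : σ ≠ σ') (t : ℕ) :
    Disjoint (chainsTop σ t) (chainsTop σ' t) := by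
  refine disjoint_left.2 fun c hc hc' => h ?_
  rw [mem_chainsTop] at hc hc'
  exact Subset.antisymm (hc'.1 σ hc.2.2.2.1) (hc.1 σ' hc'.2.2.2.1)

theorem card_chainsTop_one (σ : Finset W) : (chainsTop σ 1).card = fnum 1 σ.card := by
  rcases σ.eq_empty_or_nonempty with rfl | hσ
  · rw [card_empty, fnum_of_lt one_pos, card_eq_zero, eq_empty_iff_forall_notMem]
    intro c hc
    rw [mem_chainsTop] at hc
    exact hc.2.1 hc.2.2.2.1
  · have : chainsTop σ 1 = {{σ}} := by
      ext c
      rw [mem_chainsTop, mem_singleton]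
      constructor
      · rintro ⟨-, -, -, hσc, hcard⟩
        obtain ⟨x, rfl⟩ := card_eq_one.1 hcard
        rw [mem_singleton.1 hσc]
      · rintro rfl
        simp [hσ.ne_empty.symm]
    obtain ⟨n, hn⟩ := Nat.exists_eq_succ_of_ne_zero hσ.card_pos.ne'
    rw [this, card_singleton, hn, fnum_one_succ]

theorem erase_mem_biUnion_chainsTop {σ : Finset W} {t : ℕ} {c : Finset (Finset W)}
    (hc : c ∈ chainsTop σ (t + 2)) :
    c.erase σ ∈ (σ.powerset.erase σ).biUnion fun τ => chainsTop τ (t + 1) := by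
  rw [mem_chainsTop] at hc
  obtain ⟨hsub, hemp, hch, hσc, hcard⟩ := hc
  have hcard' : (c.erase σ).card = t + 1 := by rw [card_erase_of_mem hσc, hcard]; rfl
  have hch' : ∀ x ∈ c.erase σ, ∀ y ∈ c.erase σ, x ⊆ y ∨ y ⊆ x := fun x hx y hy =>
    hch x (mem_of_mem_erase hx) y (mem_of_mem_erase hy)
  obtain ⟨τ, hτ, hτmax⟩ := exists_max_of_chain (card_pos.1 (by omega)) hch'
  refine mem_biUnion.2 ⟨τ, ?_, ?_⟩
  · exact mem_erase.2 ⟨ne_of_mem_erase hτ, mem_powerset.2 (hsub τ (mem_of_mem_erase hτ))⟩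
  · exact mem_chainsTop.2 ⟨hτmax, fun h => hemp (mem_of_mem_erase h), hch', hτ, hcard'⟩

theorem insert_mem_chainsTop {σ τ : Finset W} {t : ℕ} {c : Finset (Finset W)}
    (hτ : τ ⊂ σ) (hc : c ∈ chainsTop τ (t + 1)) : insert σ c ∈ chainsTop σ (t + 2) := by
  rw [mem_chainsTop] at hc ⊢
  obtain ⟨hsub, hemp, hch, -, hcard⟩ := hc
  have hbelow : ∀ x ∈ c, x ⊆ σ := fun x hx => (hsub x hx).trans hτ.subset
  have hσc : σ ∉ c := fun h => hτ.not_subset (hsub σ h)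
  refine ⟨?_, ?_, ?_, mem_insert_self σ c, by rw [card_insert_of_notMem hσc, hcard]⟩
  · simpa using hbelow
  · rw [mem_insert, not_or]
    exact ⟨fun h => not_ssubset_empty τ (h ▸ hτ), hemp⟩
  · simp only [mem_insert]
    rintro x (rfl | hx) y (rfl | hy)
    · exact Or.inl le_rfl
    · exact Or.inr (hbelow y hy)
    · exact Or.inl (hbelow x hx)
    · exact hch x hx y hy

theorem card_chainsTop_add_two (σ : Finset W) (t : ℕ) :
    (chainsTop σ (t + 2)).card = ∑ τ ∈ σ.powerset.erase σ, (chainsTop τ (t + 1)).card := by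
  rw [← card_biUnion fun τ _ τ' _ h => chainsTop_disjoint h (t + 1)]
  refine card_nbij' (fun c => c.erase σ) (insert σ) (fun c hc => erase_mem_biUnion_chainsTop hc)
    (fun c hc => ?_) (fun c hc => insert_erase (mem_chainsTop.1 hc).2.2.2.1) (fun c hc => ?_)
  all_goals
    obtain ⟨τ, hτ, hc⟩ := mem_biUnion.1 hc
    obtain ⟨hτσ, hτ⟩ := mem_erase.1 hτ
    have hτσ : τ ⊂ σ := (mem_powerset.1 hτ).ssubset_of_ne hτσ
  · exact insert_mem_chainsTop hτσ hc
  · exact erase_insert fun h => hτσ.not_subset ((mem_chainsTop.1 hc).1 σ h)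

theorem sum_powerset_erase_apply_card (σ : Finset W) (f : ℕ → ℕ) :
    ∑ τ ∈ σ.powerset.erase σ, f τ.card = ∑ m ∈ range σ.card, σ.card.choose m * f m := by
  have h := sum_powerset_apply_card f (x := σ)
  rw [← add_sum_erase _ _ (mem_powerset_self σ), sum_range_succ, Nat.choose_self] at h
  simp only [smul_eq_mul] at h
  omega

theorem card_chainsTop (t : ℕ) (σ : Finset W) :
    (chainsTop σ (t + 1)).card = fnum (t + 1) σ.card := by
  induction t generalizing σ with
  | zero => exact card_chainsTop_one σ
  | succ t ih =>
    rw [card_chainsTop_add_two, sum_congr rfl fun τ _ => ih τ, sum_powerset_erase_apply_card,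
      sum_range_choose_mul_fnum]

variable {Δ : Finset (Finset W)} {d : ℕ}

theorem bary_closed (Δ : Finset (Finset W)) : ∀ c ∈ bary Δ, ∀ c' ⊆ c, c' ∈ bary Δ := by
  intro c hc c' hc'
  rw [mem_bary] at hc ⊢
  exact ⟨hc'.trans hc.1, fun h => hc.2.1 (hc' h), fun x hx y hy => hc.2.2 x (hc' hx) y (hc' hy)⟩

theorem card_le_of_mem_bary (hdim : ∀ σ ∈ Δ, σ.card ≤ d + 1) :
    ∀ c ∈ bary Δ, c.card ≤ d + 1 := by
  intro c hc
  obtain ⟨hsub, hemp, hch⟩ := mem_bary.1 hc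
  have hinj : Set.InjOn card (c : Set (Finset W)) := fun x hx y hy hxy =>
    (hch x hx y hy).elim (eq_of_subset_of_card_le · hxy.ge)
      fun h => (eq_of_subset_of_card_le h hxy.le).symm
  calc c.card ≤ (Icc 1 (d + 1)).card := card_le_card_of_injOn card (fun x hx => ?_) hinj
    _ = d + 1 := by simp
  rw [coe_Icc, Set.mem_Icc, Nat.one_le_iff_ne_zero, Ne, card_eq_zero]
  exact ⟨fun h => hemp (h ▸ hx), hdim x (hsub hx)⟩

theorem sum_apply_card_eq_sum_fcount (hdim : ∀ σ ∈ Δ, σ.card ≤ d + 1) (f : ℕ → ℕ) (hf : f 0 = 0) :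
    ∑ σ ∈ Δ, f σ.card = ∑ j ∈ range (d + 1), f (j + 1) * fcount Δ j := by
  rw [← sum_fiberwise_of_maps_to (g := card) (t := range (d + 2))
    fun σ hσ => mem_range.2 (Nat.lt_succ_of_le (hdim σ hσ)), sum_range_succ']
  have hfiber : ∀ m, ∑ σ ∈ Δ with σ.card = m, f σ.card = f m * (Δ.filter (·.card = m)).card :=
    fun m => by
      rw [sum_congr rfl fun σ hσ => by rw [(mem_filter.1 hσ).2], sum_const, smul_eq_mul, mul_comm]
  simp only [hfiber, hf, zero_mul, add_zero, fcount]

theorem fcount_bary (hclosed : ∀ σ ∈ Δ, ∀ τ ⊆ σ, τ ∈ Δ) (hdim : ∀ σ ∈ Δ, σ.card ≤ d + 1) (i : ℕ) :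
    fcount (bary Δ) i = ∑ j ∈ range (d + 1), fnum (i + 1) (j + 1) * fcount Δ j := by
  have hpartition : (bary Δ).filter (·.card = i + 1) = Δ.biUnion fun σ => chainsTop σ (i + 1) := by
    ext c
    rw [mem_filter, mem_biUnion, mem_bary]
    constructor
    · rintro ⟨⟨hsub, hemp, hch⟩, hcard⟩
      obtain ⟨τ, hτ, hτmax⟩ := exists_max_of_chain (card_pos.1 (by omega)) hch
      exact ⟨τ, hsub hτ, mem_chainsTop.2 ⟨hτmax, hemp, hch, hτ, hcard⟩⟩
    · rintro ⟨σ, hσ, hc⟩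
      obtain ⟨hsub, hemp, hch, -, hcard⟩ := mem_chainsTop.1 hc
      exact ⟨⟨fun x hx => hclosed σ hσ x (hsub x hx), hemp, hch⟩, hcard⟩
  rw [fcount, hpartition, card_biUnion fun σ _ σ' _ h => chainsTop_disjoint h (i + 1)]
  simp only [card_chainsTop]
  exact sum_apply_card_eq_sum_fcount hdim _ (fnum_of_lt i.succ_pos)

end Subdivision

theorem Frat_self (d : ℕ) : Frat d (d + 1) = 1 := by
  simp [Frat, FratAux]

theorem Frat_eq_of_lt {i d : ℕ} (h : i < d) :
    Frat d (i + 1) = (∑ j ∈ Ioc i d, (fnum (i + 1) (j + 1) : ℚ) * Frat d (j + 1))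
      / ((d + 1).factorial - (i + 1).factorial) := by
  rw [Frat, show d + 1 - (i + 1) = d - i - 1 + 1 by omega, FratAux, if_neg (by omega),
    show d - (d - i - 1) = i + 1 by omega,
    sum_attach _ fun x => (fnum (i + 1) (d - x + 1) : ℚ) * FratAux d x, one_div_mul_eq_div]
  congr 1
  refine sum_nbij' (fun x => d - x) (fun j => d - j) ?_ ?_ ?_ ?_ ?_ <;> intro x hx <;>
    simp only [mem_range, mem_Ioc] at hx ⊢
  · omega
  · omega
  · omega
  · omega
  · rw [Frat, show d + 1 - (d - x + 1) = x by omega]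

def HasFactorialExpansion (d n : ℕ) (g : ℕ → ℚ) (c₀ : ℚ) : Prop :=
  ∃ C : ℕ → ℚ, (∀ k, g k = ∑ l ∈ range n, C l * ((d + 1 - l).factorial : ℚ) ^ k) ∧ C 0 = c₀

theorem HasFactorialExpansion.mono {d n n' : ℕ} {g : ℕ → ℚ} {c₀ : ℚ}
    (h : HasFactorialExpansion d n g c₀) (hn : 0 < n) (hnn' : n ≤ n') :
    HasFactorialExpansion d n' g c₀ := by
  obtain ⟨C, hC, hC0⟩ := h
  refine ⟨fun l => if l < n then C l else 0, fun k => ?_, by simp [hn, hC0]⟩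
  dsimp only
  rw [hC k, ← sum_range_add_sum_Ico _ hnn', sum_eq_zero (s := Ico n n') fun l hl => by
    rw [if_neg (mem_Ico.1 hl).1.not_gt, zero_mul], add_zero]
  exact sum_congr rfl fun l hl => by rw [if_pos (mem_range.1 hl)]

theorem exists_eq_sum_mul_pow_of_rec {K : Type*} [Field K] {n : ℕ} {μ b g : ℕ → K}
    (hμ : ∀ l < n, μ l ≠ μ n)
    (hrec : ∀ k, g (k + 1) = μ n * g k + ∑ l ∈ range n, b l * μ l ^ k) :
    ∃ c : ℕ → K, (∀ k, g k = ∑ l ∈ range (n + 1), c l * μ l ^ k) ∧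
      (∀ l < n, c l = b l / (μ l - μ n)) ∧ c n = g 0 - ∑ l ∈ range n, c l := by
  set c : ℕ → K := fun l =>
    if l < n then b l / (μ l - μ n) else g 0 - ∑ l ∈ range n, b l / (μ l - μ n)
  have hc : ∀ l < n, c l = b l / (μ l - μ n) := fun l hl => if_pos hl
  have hcn : c n = g 0 - ∑ l ∈ range n, c l := by
    rw [sum_congr rfl fun l hl => hc l (mem_range.1 hl)]
    exact if_neg (lt_irrefl n)
  refine ⟨c, fun k => ?_, hc, hcn⟩
  induction k with
  | zero => simp [sum_range_succ, hcn]
  | succ k ih =>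
    have hterm : ∀ l ∈ range n, c l * μ l ^ (k + 1) = μ n * (c l * μ l ^ k) + b l * μ l ^ k := by
      intro l hl
      have hne : μ l - μ n ≠ 0 := sub_ne_zero.2 (hμ l (mem_range.1 hl))
      rw [hc l (mem_range.1 hl)]
      field_simp
      ring
    rw [hrec, ih, sum_range_succ, sum_range_succ, sum_congr rfl hterm, sum_add_distrib, mul_add,
      mul_sum]
    ring

theorem abs_sum_mul_pow_le {ι K : Type*} [CommRing K] [LinearOrder K] [IsStrictOrderedRing K]
    (s : Finset ι) (C x : ι → K) {μ : K} (hx : ∀ l ∈ s, 0 ≤ x l ∧ x l ≤ μ) (k : ℕ) :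
    |∑ l ∈ s, C l * x l ^ k| ≤ (∑ l ∈ s, |C l|) * μ ^ k := by
  calc |∑ l ∈ s, C l * x l ^ k| ≤ ∑ l ∈ s, |C l * x l ^ k| := abs_sum_le_sum_abs _ _
    _ ≤ ∑ l ∈ s, |C l| * μ ^ k := sum_le_sum fun l hl => by
        rw [abs_mul, abs_pow, abs_of_nonneg (hx l hl).1]
        exact mul_le_mul_of_nonneg_left (pow_le_pow_left₀ (hx l hl).1 (hx l hl).2 k) (abs_nonneg _)
    _ = (∑ l ∈ s, |C l|) * μ ^ k := (sum_mul _ _ _).symm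

section Iterated

variable {V : Type} [DecidableEq V] {Δ : Finset (Finset V)} {d : ℕ}

theorem iterBary_closed (hclosed : ∀ σ ∈ Δ, ∀ τ ⊆ σ, τ ∈ Δ) :
    ∀ k, ∀ σ ∈ iterBary Δ k, ∀ τ ⊆ σ, τ ∈ iterBary Δ k
  | 0 => hclosed
  | k + 1 => bary_closed (iterBary Δ k)

theorem card_le_of_mem_iterBary (hdim : ∀ σ ∈ Δ, σ.card ≤ d + 1) :
    ∀ k, ∀ σ ∈ iterBary Δ k, σ.card ≤ d + 1
  | 0 => hdim
  | k + 1 => card_le_of_mem_bary (card_le_of_mem_iterBary hdim k)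

theorem fcount_iterBary_succ_eq_sum (hclosed : ∀ σ ∈ Δ, ∀ τ ⊆ σ, τ ∈ Δ)
    (hdim : ∀ σ ∈ Δ, σ.card ≤ d + 1) (k i : ℕ) :
    fcount (iterBary Δ (k + 1)) i
      = ∑ j ∈ range (d + 1), fnum (i + 1) (j + 1) * fcount (iterBary Δ k) j :=
  fcount_bary (iterBary_closed hclosed k) (card_le_of_mem_iterBary hdim k) i

theorem fcount_iterBary_succ (hclosed : ∀ σ ∈ Δ, ∀ τ ⊆ σ, τ ∈ Δ)
    (hdim : ∀ σ ∈ Δ, σ.card ≤ d + 1) {i : ℕ} (hi : i ≤ d) (k : ℕ) :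
    (fcount (iterBary Δ (k + 1)) i : ℚ) = (i + 1).factorial * fcount (iterBary Δ k) i
      + ∑ j ∈ Ioc i d, (fnum (i + 1) (j + 1) : ℚ) * fcount (iterBary Δ k) j := by
  rw [fcount_iterBary_succ_eq_sum hclosed hdim]
  push_cast
  exact sum_range_fnum_mul hi _

theorem hasFactorialExpansion_fcount_of_forall_Ioc (hclosed : ∀ σ ∈ Δ, ∀ τ ⊆ σ, τ ∈ Δ)
    (hdim : ∀ σ ∈ Δ, σ.card ≤ d + 1) {i : ℕ} (hi : i ≤ d)
    (ih : ∀ j ∈ Ioc i d, HasFactorialExpansion d (d - i)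
      (fun k => fcount (iterBary Δ k) j) (fcount Δ d * Frat d (j + 1))) :
    HasFactorialExpansion d (d - i + 1)
      (fun k => fcount (iterBary Δ k) i) (fcount Δ d * Frat d (i + 1)) := by
  choose! C hC hC0 using ih
  dsimp only at hC
  set b : ℕ → ℚ := fun l => ∑ j ∈ Ioc i d, (fnum (i + 1) (j + 1) : ℚ) * C j l
  have hlast : d + 1 - (d - i) = i + 1 := by omega
  have hμ : ∀ l < d - i, ((d + 1 - l).factorial : ℚ) ≠ (d + 1 - (d - i)).factorial := by
    intro l hl
    rw [hlast]
    exact_mod_cast ((Nat.factorial_lt (Nat.succ_pos i)).2 (by omega)).ne'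
  have hrec : ∀ k, (fcount (iterBary Δ (k + 1)) i : ℚ)
      = (d + 1 - (d - i)).factorial * fcount (iterBary Δ k) i
        + ∑ l ∈ range (d - i), b l * ((d + 1 - l).factorial : ℚ) ^ k := by
    intro k
    rw [fcount_iterBary_succ hclosed hdim hi, hlast,
      sum_congr rfl fun j hj => by rw [hC j hj k, mul_sum], sum_comm]
    simp only [b, sum_mul, mul_assoc]
  obtain ⟨c, hc, hcb, hcn⟩ :=
    exists_eq_sum_mul_pow_of_rec (μ := fun l => ((d + 1 - l).factorial : ℚ))
      (g := fun k => (fcount (iterBary Δ k) i : ℚ)) hμ hrec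
  refine ⟨c, hc, ?_⟩
  rcases hi.lt_or_eq with hlt | rfl
  · have hb0 : b 0 = fcount Δ d * ∑ j ∈ Ioc i d, (fnum (i + 1) (j + 1) : ℚ) * Frat d (j + 1) := by
      simp only [b, mul_sum]
      exact sum_congr rfl fun j hj => by rw [hC0 j hj]; ring
    rw [hcb 0 (by omega), hb0, Frat_eq_of_lt hlt, hlast, Nat.sub_zero]
    ring
  · rw [Nat.sub_self] at hcn
    rw [hcn, sum_range_zero, sub_zero, Frat_self, mul_one]
    rfl

theorem hasFactorialExpansion_fcount_iterBary (hclosed : ∀ σ ∈ Δ, ∀ τ ⊆ σ, τ ∈ Δ)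
    (hdim : ∀ σ ∈ Δ, σ.card ≤ d + 1) {i : ℕ} (hi : i ≤ d) :
    HasFactorialExpansion d (d - i + 1)
      (fun k => fcount (iterBary Δ k) i) (fcount Δ d * Frat d (i + 1)) := by
  induction h : d - i using Nat.strong_induction_on generalizing i with
  | _ n ih =>
    subst h
    refine hasFactorialExpansion_fcount_of_forall_Ioc hclosed hdim hi fun j hj => ?_
    obtain ⟨hij, hjd⟩ := mem_Ioc.1 hj
    exact (ih (d - j) (by omega) hjd rfl).mono (Nat.succ_pos _) (by omega)

end Iterated

theorem stmt15_general {V : Type} [DecidableEq V] (Δ : Finset (Finset V)) (d : ℕ)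
    (hclosed : ∀ σ ∈ Δ, ∀ τ ⊆ σ, τ ∈ Δ)
    (hdim : ∀ σ ∈ Δ, σ.card ≤ d + 1)
    (i : ℕ) (hi : i ≤ d) :
    ∃ C : ℕ → ℚ,
      (∀ k : ℕ, ((fcount (iterBary Δ k) i : ℚ))
          = ∑ j ∈ Finset.range (d - i + 1), C j * ((d + 1 - j).factorial : ℚ) ^ k) ∧
      C 0 = (fcount Δ d : ℚ) * Frat d (i + 1) ∧
      ∃ B : ℚ, ∀ k : ℕ,
        |(fcount (iterBary Δ k) i : ℚ)
            - (fcount Δ d : ℚ) * Frat d (i + 1) * ((d + 1).factorial : ℚ) ^ k|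
          ≤ B * ((d.factorial : ℚ)) ^ k := by
  obtain ⟨C, hC, hC0⟩ := hasFactorialExpansion_fcount_iterBary hclosed hdim hi
  dsimp only at hC
  refine ⟨C, hC, hC0, ∑ l ∈ range (d - i), |C (l + 1)|, fun k => ?_⟩
  have hlower : (fcount (iterBary Δ k) i : ℚ)
        - fcount Δ d * Frat d (i + 1) * ((d + 1).factorial : ℚ) ^ k
      = ∑ l ∈ range (d - i), C (l + 1) * ((d - l).factorial : ℚ) ^ k := by
    rw [hC k, sum_range_succ', hC0, Nat.sub_zero, add_sub_cancel_right]
    exact sum_congr rfl fun l _ => by rw [Nat.add_sub_add_right]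
  rw [hlower]
  exact abs_sum_mul_pow_le _ _ _
    (fun l _ => ⟨by positivity, by exact_mod_cast Nat.factorial_le (Nat.sub_le d l)⟩) k

/-- For a `d`-dimensional abstract simplicial complex `Δ` and `0 ≤ i ≤ d`,
`f_i^{Δ^{(k)}} = Σ_{j=0}^{d-i} C_{j,i} ((d+1-j)!)^k` with rational constants `C_{j,i}`,
`C_{0,i} = f_d^Δ · F_{i,d}`; in particular
`f_i^{Δ^{(k)}} = f_d^Δ F_{i,d} (d+1)!^k + O(d!^k)` as `k → ∞`. -/
theorem stmt15 {V : Type} [DecidableEq V] (Δ : Finset (Finset V)) (d : ℕ)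
    (hclosed : ∀ σ ∈ Δ, ∀ τ ⊆ σ, τ ∈ Δ)
    (hdim : ∀ σ ∈ Δ, σ.card ≤ d + 1) (htop : ∃ σ ∈ Δ, σ.card = d + 1)
    (i : ℕ) (hi : i ≤ d) :
    ∃ C : ℕ → ℚ,
      (∀ k : ℕ, ((fcount (iterBary Δ k) i : ℚ))
          = ∑ j ∈ Finset.range (d - i + 1), C j * ((d + 1 - j).factorial : ℚ) ^ k) ∧
      C 0 = (fcount Δ d : ℚ) * Frat d (i + 1) ∧
      ∃ B : ℚ, ∀ k : ℕ,
        |(fcount (iterBary Δ k) i : ℚ)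
            - (fcount Δ d : ℚ) * Frat d (i + 1) * ((d + 1).factorial : ℚ) ^ k|
          ≤ B * ((d.factorial : ℚ)) ^ k :=
  stmt15_general Δ d hclosed hdim i hi
end

section
/- There exists a constant C > 0 such that for all d ≥ 1, the number of squarefree positive integers of weight d (i.e., products of exactly d distinct primes) not exceeding p_1 p_2 ⋯ p_{d+1} is O(C^d). -/
/-- `π_d(x)`: the number of squarefree positive integers of weight `d`
(products of exactly `d` distinct primes) not exceeding `x : ℕ`. -/
def piWeight (d x : ℕ) : ℕ :=
  (((Finset.Icc 1 x)).filter fun m => Squarefree m ∧ m.primeFactors.card = d).card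

/-- The primorialN `p_1 p_2 ⋯ p_m` (product of the first `m` primes),
with `Nat.nth Nat.Prime i` the `(i+1)`-st prime. -/
noncomputable def primorialN (m : ℕ) : ℕ := ∏ i ∈ Finset.range m, Nat.nth Nat.Prime i

/-!
Write `p = p_d`. A squarefree `m ≤ p_1 ⋯ p_{d+1}` of weight `d` factors as `m = a t`, where
`a` is a product of primes `≤ p` (at most `2^d` choices) and the set `T` of primes dividing `t`
lies above `p`. Comparing with `p_1 ⋯ p_{d+1}` and using Bertrand's `p_{d+1} ≤ 2p` gives
`∏_{q ∈ T} q ≤ 2p · p^{|T|}`, and Rankin's trick bounds the number of such `T` by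
`(2p)^λ ∏_{q > p} (1 + (p/q)^λ) ≤ (2p)^λ exp (p / (λ - 1))`. Chebyshev's estimate
`p_d = O(d log d)` allows `λ ≍ log d`, which makes both factors exponential in `d`.
-/

open Finset

namespace Nat

theorem lcmUpto_le_pow_primeCounting (n : ℕ) : lcmUpto n ≤ n ^ n.primeCounting := by
  rw [lcmUpto_eq_prod_pow_log, ← primesLE_card_eq_primeCounting]
  refine prod_le_pow_card _ _ _ fun p hp => pow_log_le_self p ?_
  have := le_of_mem_primesLE hp
  have := two_le_of_mem_primesLE hp
  omega

theorem nth_prime_le_of_lt_two_pow {n k : ℕ} (h : (n + 1) ^ (k + 1) < 2 ^ n) :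
    nth Prime k ≤ n := by
  by_contra! hlt
  have hπ : n.primeCounting ≤ k := le_nth_of_count_le hlt
  have : 2 ^ n ≤ (n + 1) ^ (k + 1) :=
    calc 2 ^ n ≤ (n + 1) * lcmUpto n := Chebyshev.two_pow_le_mul_lcmUpto n
      _ ≤ (n + 1) * (n + 1) ^ k := by
        gcongr
        exact (lcmUpto_le_pow_primeCounting n).trans (by gcongr <;> omega)
      _ = (n + 1) ^ (k + 1) := by ring
  omega

theorem nth_prime_le_two_pow_of_succ_mul_lt {j k : ℕ} (h : (j + 1) * (k + 1) < 2 ^ j) :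
    nth Prime k ≤ 2 ^ j := by
  refine nth_prime_le_of_lt_two_pow ?_
  calc (2 ^ j + 1) ^ (k + 1) ≤ (2 ^ (j + 1)) ^ (k + 1) := by
        gcongr
        rw [pow_succ]
        linarith [Nat.one_le_two_pow (n := j)]
    _ = 2 ^ ((j + 1) * (k + 1)) := by rw [← pow_mul]
    _ < 2 ^ 2 ^ j := Nat.pow_lt_pow_right one_lt_two h

theorem nth_prime_succ_le_two_mul (k : ℕ) : nth Prime (k + 1) ≤ 2 * nth Prime k := by
  obtain ⟨r, hr, hlt, hle⟩ :=
    exists_prime_lt_and_le_two_mul (nth Prime k) (prime_nth_prime k).ne_zero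
  calc nth Prime (k + 1) ≤ nth Prime (count Prime r) :=
        (nth_le_nth infinite_setOfPred_prime).2
          ((lt_nth_iff_count_lt infinite_setOfPred_prime).2 hlt)
    _ = r := nth_count hr
    _ ≤ 2 * nth Prime k := hle

theorem primesLE_nth_prime_eq_image_range (k : ℕ) :
    primesLE (nth Prime k) = (range (k + 1)).image (nth Prime) := by
  ext q
  simp only [mem_primesLE, mem_image, mem_range, Nat.lt_succ_iff]
  constructor
  · rintro ⟨hq, hqp⟩
    exact ⟨count Prime q, (count_le_iff_le_nth infinite_setOfPred_prime).2 hq, nth_count hqp⟩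
  · rintro ⟨i, hi, rfl⟩
    exact ⟨(nth_le_nth infinite_setOfPred_prime).2 hi, prime_nth_prime i⟩

theorem card_primesLE_nth_prime (k : ℕ) : #(primesLE (nth Prime k)) = k + 1 := by
  rw [primesLE_nth_prime_eq_image_range,
    Finset.card_image_of_injective _ (nth_injective infinite_setOfPred_prime), card_range]

theorem primeFactors_sdiff_primesLE_subset_Ioc (m p : ℕ) :
    m.primeFactors \ primesLE p ⊆ Ioc p m := by
  intro q hq
  obtain ⟨hqm, hqF⟩ := mem_sdiff.1 hq
  have hqp : ¬ q ≤ p := fun h => hqF (mem_primesLE.2 ⟨h, prime_of_mem_primeFactors hqm⟩)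
  exact mem_Ioc.2 ⟨not_le.1 hqp, le_of_mem_primeFactors hqm⟩

end Nat

theorem primorialN_add_two (k : ℕ) :
    primorialN (k + 2) =
      (∏ q ∈ Nat.primesLE (Nat.nth Nat.Prime k), q) * Nat.nth Nat.Prime (k + 1) := by
  rw [Nat.primesLE_nth_prime_eq_image_range,
    prod_image fun _ _ _ _ h => Nat.nth_injective Nat.infinite_setOfPred_prime h,
    primorialN, prod_range_succ]

section LargePrimeFactors

variable {k m : ℕ}

local notation "p" => Nat.nth Nat.Prime k

theorem prod_primeFactors_sdiff_primesLE_le (hm : m ≤ primorialN (k + 2)) (hsq : Squarefree m)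
    (hcard : #m.primeFactors = k + 1) :
    ∏ q ∈ m.primeFactors \ Nat.primesLE p, q ≤
      2 * p ^ (#(m.primeFactors \ Nat.primesLE p) + 1) := by
  set F := Nat.primesLE p
  set A := m.primeFactors ∩ F
  set T := m.primeFactors \ F
  have hAF : A ⊆ F := inter_subset_right
  have hA : 0 < ∏ q ∈ A, q :=
    prod_pos fun q hq => (Nat.prime_of_mem_primeFactors (mem_of_mem_inter_left hq)).pos
  have hcardF : #(F \ A) = #T := by
    have hAT : #A + #T = k + 1 := hcard ▸ card_inter_add_card_sdiff m.primeFactors F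
    rw [card_sdiff_of_subset hAF, Nat.card_primesLE_nth_prime]
    omega
  have hFA : ∏ q ∈ F \ A, q ≤ p ^ #T :=
    hcardF ▸ prod_le_pow_card _ _ _ fun q hq => Nat.le_of_mem_primesLE (mem_sdiff.1 hq).1
  refine Nat.le_of_mul_le_mul_left ?_ hA
  calc (∏ q ∈ A, q) * ∏ q ∈ T, q = m := by
        rw [prod_inter_mul_prod_sdiff, Nat.prod_primeFactors_of_squarefree hsq]
    _ ≤ (∏ q ∈ F \ A, q) * (∏ q ∈ A, q) * Nat.nth Nat.Prime (k + 1) := by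
        rwa [prod_sdiff hAF, ← primorialN_add_two]
    _ ≤ p ^ #T * (∏ q ∈ A, q) * (2 * p) := by
        gcongr
        exact Nat.nth_prime_succ_le_two_mul k
    _ = (∏ q ∈ A, q) * (2 * p ^ (#T + 1)) := by ring

theorem piWeight_le_two_pow_mul_card :
    piWeight (k + 1) (primorialN (k + 2)) ≤ 2 ^ (k + 1) *
      #{T ∈ (Ioc p (primorialN (k + 2))).powerset | ∏ q ∈ T, q ≤ 2 * p ^ (#T + 1)} := by
  have hF : 2 ^ (k + 1) = #(Nat.primesLE p).powerset := by
    rw [card_powerset, Nat.card_primesLE_nth_prime]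
  rw [hF, ← card_product, piWeight]
  refine card_le_card_of_injOn
    (fun m => (m.primeFactors ∩ Nat.primesLE p, m.primeFactors \ Nat.primesLE p)) ?_ ?_
  · intro m hm
    simp only [coe_filter, mem_Icc, Set.mem_ofPred_eq] at hm
    obtain ⟨⟨-, hmP⟩, hsq, hcard⟩ := hm
    simp only [coe_product, Set.mem_prod, mem_coe, mem_powerset, mem_filter]
    exact ⟨inter_subset_right, (Nat.primeFactors_sdiff_primesLE_subset_Ioc m p).trans
      (Ioc_subset_Ioc_right hmP), prod_primeFactors_sdiff_primesLE_le hmP hsq hcard⟩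
  · intro m₁ hm₁ m₂ hm₂ h
    simp only [coe_filter, Set.mem_ofPred_eq] at hm₁ hm₂
    rw [← Nat.prod_primeFactors_of_squarefree hm₁.2.1,
      ← Nat.prod_primeFactors_of_squarefree hm₂.2.1,
      ← sdiff_union_inter m₁.primeFactors (Nat.primesLE p),
      ← sdiff_union_inter m₂.primeFactors (Nat.primesLE p)]
    simp only [Prod.mk.injEq] at h
    rw [h.1, h.2]

end LargePrimeFactors

theorem Finset.card_filter_powerset_le_pow_mul_exp {ι : Type*} (s : Finset ι) {w : ι → ℝ}
    (hw : ∀ i, 0 ≤ w i) {c : ℝ} (hc : 0 ≤ c) (n : ℕ) :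
    (#{t ∈ s.powerset | 1 ≤ c * ∏ i ∈ t, w i} : ℝ) ≤
      c ^ n * Real.exp (∑ i ∈ s, w i ^ n) := by
  have hnonneg (t : Finset ι) : 0 ≤ c * ∏ i ∈ t, w i :=
    mul_nonneg hc (prod_nonneg fun i _ => hw i)
  calc (#{t ∈ s.powerset | 1 ≤ c * ∏ i ∈ t, w i} : ℝ)
      = ∑ t ∈ s.powerset with 1 ≤ c * ∏ i ∈ t, w i, 1 := by simp
    _ ≤ ∑ t ∈ s.powerset with 1 ≤ c * ∏ i ∈ t, w i, (c * ∏ i ∈ t, w i) ^ n :=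
        sum_le_sum fun t ht => one_le_pow₀ (mem_filter.1 ht).2
    _ ≤ ∑ t ∈ s.powerset, (c * ∏ i ∈ t, w i) ^ n :=
        sum_le_sum_of_subset_of_nonneg (filter_subset _ _) fun t _ _ => pow_nonneg (hnonneg t) n
    _ = c ^ n * ∏ i ∈ s, (1 + w i ^ n) := by
        simp only [prod_one_add, mul_sum, mul_pow, prod_pow]
    _ ≤ c ^ n * Real.exp (∑ i ∈ s, w i ^ n) := by
        gcongr
        exact Real.prod_one_add_le_exp_sum s fun i => pow_nonneg (hw i) n

-- A discrete form of `d/dx (a/x)^n = -(n/a) (a/x)^(n+1)`, which makes the sum below telescope.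
theorem mul_div_add_one_pow_succ_le {a x : ℝ} (ha : 0 ≤ a) (hx : 0 < x) (n : ℕ) :
    n * (a / (x + 1)) ^ (n + 1) ≤ a * ((a / x) ^ n - (a / (x + 1)) ^ n) := by
  have hbern : 1 + n * (1 / x) ≤ (1 + 1 / x) ^ n :=
    one_add_mul_le_pow (by linarith [one_div_pos.2 hx]) n
  have hu : (a / x) ^ n = (a / (x + 1)) ^ n * (1 + 1 / x) ^ n := by
    rw [← mul_pow]; congr 1; field_simp
  calc n * (a / (x + 1)) ^ (n + 1) = a * (a / (x + 1)) ^ n * (n / (x + 1)) := by ring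
    _ ≤ a * (a / (x + 1)) ^ n * (n * (1 / x)) := by
        gcongr
        rw [mul_one_div]
        exact div_le_div_of_nonneg_left (by positivity) hx (by linarith)
    _ ≤ a * (a / (x + 1)) ^ n * ((1 + 1 / x) ^ n - 1) := by gcongr; linarith
    _ = a * ((a / x) ^ n - (a / (x + 1)) ^ n) := by rw [hu]; ring

theorem sum_Ioc_div_pow_succ_le {p : ℕ} (hp : 0 < p) {n : ℕ} (hn : 0 < n) (N : ℕ) :
    ∑ q ∈ Ioc p N, ((p : ℝ) / q) ^ (n + 1) ≤ p / n := by
  have hn' : (0 : ℝ) < n := by exact_mod_cast hn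
  rcases lt_or_ge N p with hN | hN
  · rw [Ioc_eq_empty (by omega), sum_empty]
    positivity
  suffices ∑ q ∈ Ioc p N, ((p : ℝ) / q) ^ (n + 1) ≤ p / n * (1 - ((p : ℝ) / N) ^ n) by
    refine this.trans (mul_le_of_le_one_right (by positivity) ?_)
    linarith [pow_nonneg (div_nonneg p.cast_nonneg N.cast_nonneg : (0 : ℝ) ≤ p / N) n]
  induction N, hN using Nat.le_induction with
  | base =>
    rw [Ioc_self, sum_empty, div_self (by positivity), one_pow, sub_self, mul_zero]
  | succ N hpN ih =>
    rw [sum_Ioc_succ_top (by omega)]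
    have hstep := mul_div_add_one_pow_succ_le p.cast_nonneg
      (show (0 : ℝ) < N by exact_mod_cast hp.trans_le hpN) n
    have : ((p : ℝ) / (N + 1)) ^ (n + 1) ≤
        p / n * (((p : ℝ) / N) ^ n - ((p : ℝ) / (N + 1)) ^ n) := by
      rw [div_mul_eq_mul_div, le_div_iff₀ hn']
      linarith
    push_cast
    linear_combination ih + this

theorem piWeight_le_two_pow_mul_pow_mul_exp (k : ℕ) {n : ℕ} (hn : 0 < n) :
    (piWeight (k + 1) (primorialN (k + 2)) : ℝ) ≤
      2 ^ (k + 1) * (2 * Nat.nth Nat.Prime k) ^ (n + 1) * Real.exp (Nat.nth Nat.Prime k / n) := by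
  set p := Nat.nth Nat.Prime k
  set P := primorialN (k + 2)
  have hp : 0 < p := (Nat.prime_nth_prime k).pos
  set w : ℕ → ℝ := fun q => p / q
  have hG : #{T ∈ (Ioc p P).powerset | ∏ q ∈ T, q ≤ 2 * p ^ (#T + 1)} ≤
      #{T ∈ (Ioc p P).powerset | 1 ≤ (2 * p : ℝ) * ∏ q ∈ T, w q} := by
    refine card_le_card fun T hT => ?_
    rw [mem_filter, mem_powerset] at hT ⊢
    refine ⟨hT.1, ?_⟩
    have hpos : (0 : ℝ) < ∏ q ∈ T, (q : ℝ) :=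
      prod_pos fun q hq => by exact_mod_cast hp.trans (mem_Ioc.1 (hT.1 hq)).1
    rw [prod_div_distrib, prod_const, ← mul_div_assoc, one_le_div hpos]
    calc ∏ q ∈ T, (q : ℝ) ≤ 2 * (p : ℝ) ^ (#T + 1) := by
          simpa using (Nat.cast_le (α := ℝ)).2 hT.2
      _ = 2 * p * p ^ #T := by ring
  calc (piWeight (k + 1) P : ℝ)
      ≤ 2 ^ (k + 1) * #{T ∈ (Ioc p P).powerset | 1 ≤ (2 * p : ℝ) * ∏ q ∈ T, w q} := by
        exact_mod_cast piWeight_le_two_pow_mul_card.trans (Nat.mul_le_mul_left _ hG)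
    _ ≤ 2 ^ (k + 1) * ((2 * p) ^ (n + 1) * Real.exp (∑ q ∈ Ioc p P, w q ^ (n + 1))) := by
        gcongr
        exact card_filter_powerset_le_pow_mul_exp _ (fun q => by positivity) (by positivity) _
    _ ≤ 2 ^ (k + 1) * (2 * p) ^ (n + 1) * Real.exp (p / n) := by
        rw [← mul_assoc]
        gcongr
        exact sum_Ioc_div_pow_succ_le hp hn P

theorem two_mul_add_five_mul_four_mul_add_nine_le_two_pow {a : ℕ} (ha : 10 ≤ a) :
    (2 * a + 5) * (4 * a + 9) ≤ 2 ^ (a + 1) := by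
  induction a, ha using Nat.le_induction with
  | base => norm_num
  | succ a _ ih => rw [pow_succ]; nlinarith

theorem exists_le_of_succ_mul_lt_two_pow {d J : ℕ} (hd : 0 < d) (hJ : (J + 1) * d < 2 ^ J) :
    ∃ j ≤ J, 0 < j ∧ (j + 1) * d < 2 ^ j ∧ 2 ^ j ≤ 2 * j * d := by
  have hex : ∃ j, (j + 1) * d < 2 ^ j := ⟨J, hJ⟩
  have hspec := Nat.find_spec hex
  obtain ⟨i, hi⟩ : ∃ i, Nat.find hex = i + 1 :=
    Nat.exists_eq_succ_of_ne_zero fun h => by rw [h] at hspec; omega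
  have hmin := not_lt.1 (Nat.find_min hex (show i < Nat.find hex by omega))
  refine ⟨Nat.find hex, Nat.find_min' hex hJ, by omega, hspec, ?_⟩
  rw [hi, pow_succ]
  linarith

theorem exists_rankin_exponent {k : ℕ} (hk : 1023 ≤ k) :
    ∃ n, 0 < n ∧ (2 * Nat.nth Nat.Prime k) ^ (n + 1) ≤ 4 ^ (k + 1) ∧
      Nat.nth Nat.Prime k ≤ (k + 1) * n := by
  obtain ⟨a, ha, had, hda⟩ : ∃ a, 10 ≤ a ∧ 2 ^ a ≤ k + 1 ∧ k + 1 < 2 ^ (a + 1) :=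
    ⟨Nat.log 2 (k + 1), Nat.le_log_of_pow_le one_lt_two (by omega),
      Nat.pow_log_le_self 2 (by omega), Nat.lt_pow_succ_log_self one_lt_two _⟩
  have hJ : (2 * a + 4 + 1) * (k + 1) < 2 ^ (2 * a + 4) :=
    calc (2 * a + 4 + 1) * (k + 1) < 2 ^ (a + 3) * 2 ^ (a + 1) := by
          refine Nat.mul_lt_mul_of_le_of_lt ?_ hda (by positivity)
          have := Nat.lt_two_pow_self (n := a)
          rw [pow_add]
          omega
      _ = 2 ^ (2 * a + 4) := by rw [← pow_add]; ring_nf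
  obtain ⟨j, hjJ, hj0, hj, hjd⟩ := exists_le_of_succ_mul_lt_two_pow (by omega) hJ
  have hp : Nat.nth Nat.Prime k ≤ 2 ^ j := Nat.nth_prime_le_two_pow_of_succ_mul_lt hj
  refine ⟨2 * j, by omega, ?_, by nlinarith⟩
  have hj2 : (j + 1) * (2 * j + 1) ≤ 2 * (k + 1) :=
    calc (j + 1) * (2 * j + 1) ≤ (2 * a + 5) * (4 * a + 9) :=
          Nat.mul_le_mul (by omega) (by omega)
      _ ≤ 2 ^ (a + 1) := two_mul_add_five_mul_four_mul_add_nine_le_two_pow ha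
      _ ≤ 2 * (k + 1) := by rw [pow_succ]; omega
  calc (2 * Nat.nth Nat.Prime k) ^ (2 * j + 1) ≤ (2 ^ (j + 1)) ^ (2 * j + 1) := by
        gcongr
        rw [pow_succ']
        omega
    _ = 2 ^ ((j + 1) * (2 * j + 1)) := by rw [← pow_mul]
    _ ≤ 2 ^ (2 * (k + 1)) := Nat.pow_le_pow_right two_pos hj2
    _ = 4 ^ (k + 1) := by rw [pow_mul]; norm_num

theorem piWeight_le_eight_mul_exp_one_pow {k : ℕ} (hk : 1023 ≤ k) :
    (piWeight (k + 1) (primorialN (k + 2)) : ℝ) ≤ (8 * Real.exp 1) ^ (k + 1) := by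
  obtain ⟨n, hn, hpow, hp⟩ := exists_rankin_exponent hk
  have hn' : (0 : ℝ) < n := by exact_mod_cast hn
  calc (piWeight (k + 1) (primorialN (k + 2)) : ℝ)
      ≤ 2 ^ (k + 1) * (2 * Nat.nth Nat.Prime k) ^ (n + 1) * Real.exp (Nat.nth Nat.Prime k / n) :=
        piWeight_le_two_pow_mul_pow_mul_exp k hn
    _ ≤ 2 ^ (k + 1) * 4 ^ (k + 1) * Real.exp (k + 1) := by
        gcongr
        · exact_mod_cast hpow
        · rw [div_le_iff₀ hn']
          exact_mod_cast hp
    _ = (8 * Real.exp 1) ^ (k + 1) := by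
        rw [mul_pow, ← Real.exp_nat_mul, mul_one, ← mul_pow]
        norm_num

/-- `π_d(p_1 ⋯ p_{d+1}) = O(C^d)`: there are constants `C, K > 0` with
`π_d(p_1 ⋯ p_{d+1}) ≤ K · C^d` for all `d ≥ 1`. -/
theorem stmt17 :
    ∃ C : ℝ, 0 < C ∧ ∃ K : ℝ, 0 < K ∧
      ∀ d : ℕ, 1 ≤ d → (piWeight d (primorialN (d + 1)) : ℝ) ≤ K * C ^ d := by
  set C := 8 * Real.exp 1
  have hC : 0 < C := by positivity
  have hO : (fun d => (piWeight d (primorialN (d + 1)) : ℝ)) =O[Filter.atTop] (C ^ ·) := by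
    refine Asymptotics.IsBigO.of_bound 1 (Filter.eventually_atTop.2 ⟨1024, fun d hd => ?_⟩)
    obtain ⟨k, rfl⟩ : ∃ k, d = k + 1 := ⟨d - 1, by omega⟩
    simpa [abs_of_pos hC] using piWeight_le_eight_mul_exp_one_pow (k := k) (by omega)
  obtain ⟨K, hK⟩ := (Asymptotics.isBigO_nat_atTop_iff fun d h => absurd h (by positivity)).1 hO
  refine ⟨C, hC, max K 1, by positivity, fun d _ => ?_⟩
  calc (piWeight d (primorialN (d + 1)) : ℝ) ≤ K * C ^ d := by
        simpa [abs_of_pos hC] using hK d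
    _ ≤ max K 1 * C ^ d := by gcongr; exact le_max_left K 1
end

section
/- Assume that for some constant D > 0 the reduced Euler characteristic bound |χ̃(Δ_n)| ≤ D · C^{d_n} (d_n + 1)! holds, where C > 0 is a constant and d_n = dim Δ_n. Then χ̃(Δ_n) = O( n · exp( -A · (log n · log log log n) / (log log n) ) ) for some constant A > 0. -/
open Real Filter

/-- The simplicial complex `Δ_n` of sets of prime factors of squarefree integers `≤ n`. -/
def DeltaComplex (n : ℕ) : Finset (Finset ℕ) :=
  ((Finset.Icc 1 n).filter Squarefree).image Nat.primeFactors

/-- The reduced Euler characteristic `χ̃(Δ_n) = Σ_{σ ∈ Δ_n} (-1)^{#σ - 1}` (equal to `-M(n)`). -/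
def chiDelta (n : ℕ) : ℤ :=
  ∑ σ ∈ DeltaComplex n, -((-1 : ℤ) ^ σ.card)

/-- The dimension `d_n` of `Δ_n`. -/
def dimDelta (n : ℕ) : ℕ :=
  (((Finset.Icc 1 n).filter Squarefree).sup fun k => k.primeFactors.card) - 1

/-!
Write `m = d_n + 1`: it is the largest number of prime factors of a squarefree `k ≤ n`, so the
product of the first `m` primes is at most `n`. Chebyshev's upper bound for `π` gives
`pₖ ≥ (k + 1) log (k + 2) / 5`, so this product exceeds `m!` by a factor `(log m / 10) ^ (m / 2)`,
which swallows `D C^m` and leaves `|χ̃(Δ_n)| ≤ n · exp (-(m / 8) log log m)`. Chebyshev's lower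
bound for `π`, applied to the primorial of `⌊log₄ n⌋` (which is at most `n`), gives
`m ≥ log n / (4 log log n)`, hence `(m / 8) log log m ≥ log n · log log log n / (64 log log n)`.
-/

open Finset

noncomputable def prodFirstPrimes (m : ℕ) : ℕ :=
  ∏ i ∈ range m, Nat.nth Nat.Prime i

def maxPrimeFactorsCard (n : ℕ) : ℕ :=
  ((Icc 1 n).filter Squarefree).sup fun k => k.primeFactors.card

lemma prodFirstPrimes_pos (m : ℕ) : 0 < prodFirstPrimes m :=
  prod_pos fun i _ => (Nat.prime_nth_prime i).pos

lemma prodFirstPrimes_le_prod {T : Finset ℕ} (hT : ∀ p ∈ T, p.Prime) :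
    prodFirstPrimes #T ≤ ∏ p ∈ T, p := by
  induction T using Finset.induction_on_max with
  | empty => simp [prodFirstPrimes]
  | insert a s has ih =>
    have ha : a ∉ s := fun h => lt_irrefl a (has a h)
    -- the `#s + 1` primes of `insert a s` are all `≤ a`, so the `#s`-th prime is `≤ a`
    have hcount : #s < Nat.count Nat.Prime (a + 1) := by
      rw [Nat.count_eq_card_filter_range]
      calc #s < #(insert a s) := by rw [card_insert_of_notMem ha]; omega
        _ ≤ _ := card_le_card fun p hp => mem_filter.2
          ⟨mem_range.2 (Nat.lt_succ_of_le ((mem_insert.1 hp).elim le_of_eq fun h => (has p h).le)),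
            hT p hp⟩
    rw [card_insert_of_notMem ha, prod_insert ha, prodFirstPrimes, prod_range_succ, mul_comm]
    exact Nat.mul_le_mul (Nat.lt_succ_iff.1 (Nat.nth_lt_of_lt_count hcount))
      (ih fun p hp => hT p (mem_insert_of_mem hp))

lemma prodFirstPrimes_maxPrimeFactorsCard_le {n : ℕ} (hn : 1 ≤ n) :
    prodFirstPrimes (maxPrimeFactorsCard n) ≤ n := by
  have hne : ((Icc 1 n).filter Squarefree).Nonempty :=
    ⟨1, mem_filter.2 ⟨mem_Icc.2 ⟨le_rfl, hn⟩, squarefree_one⟩⟩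
  obtain ⟨k, hk, hmax⟩ := exists_mem_eq_sup _ hne fun k => k.primeFactors.card
  obtain ⟨hk, hsq⟩ := mem_filter.1 hk
  calc prodFirstPrimes (maxPrimeFactorsCard n) = prodFirstPrimes #k.primeFactors := by
        rw [maxPrimeFactorsCard, hmax]
    _ ≤ ∏ p ∈ k.primeFactors, p := prodFirstPrimes_le_prod fun _ => Nat.prime_of_mem_primeFactors
    _ = k := Nat.prod_primeFactors_of_squarefree hsq
    _ ≤ n := (mem_Icc.1 hk).2

lemma primeCounting_le_maxPrimeFactorsCard {x n : ℕ} (h : primorial x ≤ n) :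
    Nat.primeCounting x ≤ maxPrimeFactorsCard n := by
  have hmem : primorial x ∈ (Icc 1 n).filter Squarefree :=
    mem_filter.2 ⟨mem_Icc.2 ⟨primorial_pos x, h⟩, squarefree_primorial x⟩
  have := le_sup (f := fun k => #k.primeFactors) hmem
  rwa [primeFactors_primorial, Nat.primesLE_card_eq_primeCounting] at this

lemma dimDelta_add_one {n : ℕ} (hn : 2 ≤ n) : dimDelta n + 1 = maxPrimeFactorsCard n := by
  have : 1 ≤ maxPrimeFactorsCard n :=
    primeCounting_le_maxPrimeFactorsCard (x := 2) (by simpa using hn)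
  rw [show dimDelta n = maxPrimeFactorsCard n - 1 from rfl]
  omega

lemma tendsto_maxPrimeFactorsCard_atTop : Tendsto maxPrimeFactorsCard atTop atTop := by
  refine tendsto_atTop.2 fun b => ?_
  obtain ⟨x, hx⟩ := (Nat.tendsto_primeCounting.eventually_ge_atTop b).exists
  filter_upwards [eventually_ge_atTop (primorial x)] with n hn
  exact hx.trans (primeCounting_le_maxPrimeFactorsCard hn)

lemma log_four_eq_two_mul_log_two : log 4 = 2 * log 2 := by
  rw [show (4 : ℝ) = 2 ^ 2 by norm_num, log_pow]
  norm_num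

lemma log_four_lt_three_halves : log 4 < 3 / 2 := by
  linarith [log_four_eq_two_mul_log_two, log_two_lt_d9]

lemma succ_mul_log_nth_prime_le (i : ℕ) :
    (i + 1) * log (Nat.nth Nat.Prime i) ≤ 5 * Nat.nth Nat.Prime i := by
  set p := Nat.nth Nat.Prime i
  have hp : (2 : ℝ) ≤ p := by exact_mod_cast (Nat.prime_nth_prime i).two_le
  have hπ : Nat.primeCounting p = i + 1 :=
    Nat.count_nth_succ_of_infinite Nat.infinite_setOfPred_prime i
  have hpi := Chebyshev.pi_le_log4_mul_div (x := p) (by linarith)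
  rw [Nat.floor_natCast, hπ, log_sqrt (by positivity)] at hpi
  push_cast at hpi
  have hlogp : 0 < log p := log_pos (by linarith)
  have hlog_le_sqrt : log p ≤ 2 * √p := by
    have := log_le_sub_one_of_pos (sqrt_pos.2 (by linarith : (0 : ℝ) < p))
    rw [log_sqrt (by positivity)] at this
    linarith
  have hsqrt : √p * √p = p := mul_self_sqrt (by positivity)
  calc (i + 1) * log p ≤ (log 4 * p / (log p / 2) + √p) * log p := by gcongr
    _ = 2 * log 4 * p + √p * log p := by field_simp
    _ ≤ 2 * log 4 * p + √p * (2 * √p) := by gcongr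
    _ ≤ 5 * p := by nlinarith [log_four_lt_three_halves]

lemma log_log_sub_log_five_le (i : ℕ) :
    log (log (i + 2)) - log 5 ≤ log (Nat.nth Nat.Prime i) - log (i + 1) := by
  set p := Nat.nth Nat.Prime i
  have hip : (i : ℝ) + 2 ≤ p := by exact_mod_cast Nat.add_two_le_nth_prime i
  have hlog : 0 < log ((i : ℝ) + 2) := log_pos (by linarith)
  have hlogp : log ((i : ℝ) + 2) ≤ log p := log_le_log (by positivity) hip
  have h := log_le_log (mul_pos (by positivity) (hlog.trans_le hlogp))
    (succ_mul_log_nth_prime_le i)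
  rw [log_mul (by positivity) (hlog.trans_le hlogp).ne', log_mul (by norm_num) (by linarith)] at h
  linarith [log_le_log hlog hlogp]

lemma log_prodFirstPrimes_sub_log_factorial (m : ℕ) :
    log (prodFirstPrimes m) - log m.factorial
      = ∑ i ∈ range m, (log (Nat.nth Nat.Prime i) - log (i + 1)) := by
  rw [prodFirstPrimes, ← prod_range_add_one_eq_factorial, sum_sub_distrib]
  push_cast
  rw [log_prod fun i _ => by exact_mod_cast (Nat.prime_nth_prime i).ne_zero,
    log_prod fun i _ => by positivity]

lemma sub_mul_le_log_prodFirstPrimes_sub_log_factorial (k m : ℕ) :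
    ((m - k : ℕ) : ℝ) * (log (log (k + 2)) - log 5)
      ≤ log (prodFirstPrimes m) - log m.factorial := by
  rw [log_prodFirstPrimes_sub_log_factorial, ← Nat.card_Ico, ← nsmul_eq_mul]
  calc #(Ico k m) • (log (log (k + 2)) - log 5)
      ≤ ∑ i ∈ Ico k m, (log (Nat.nth Nat.Prime i) - log (i + 1)) := by
        refine card_nsmul_le_sum _ _ _ fun i hi => le_trans ?_ (log_log_sub_log_five_le i)
        have hki : (k : ℝ) ≤ i := by exact_mod_cast (mem_Ico.1 hi).1
        gcongr
        exact log_pos (by linarith)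
    _ ≤ ∑ i ∈ range m, (log (Nat.nth Nat.Prime i) - log (i + 1)) := by
        refine sum_le_sum_of_subset_of_nonneg (fun i hi => mem_range.2 (mem_Ico.1 hi).2)
          fun i _ _ => sub_nonneg.2 (log_le_log (by positivity) ?_)
        exact_mod_cast (Nat.add_two_le_nth_prime i).trans' (Nat.le_succ _)

lemma half_mul_le_log_prodFirstPrimes_sub_log_factorial {m : ℕ} (hm : 4 ≤ m) :
    m / 2 * (log (log m) - log 10) ≤ log (prodFirstPrimes m) - log m.factorial := by
  have hnonneg := sub_mul_le_log_prodFirstPrimes_sub_log_factorial m m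
  rw [Nat.sub_self, Nat.cast_zero, zero_mul] at hnonneg
  rcases le_or_gt (log (log m)) (log 10) with h | h
  · exact (mul_nonpos_of_nonneg_of_nonpos (by positivity) (by linarith)).trans hnonneg
  have hm4 : (4 : ℝ) ≤ m := by exact_mod_cast hm
  have hhalf : (m : ℝ) / 2 ≤ ((m - m / 2 : ℕ) : ℝ) := by
    rw [Nat.cast_sub (Nat.div_le_self m 2)]
    linarith [Nat.cast_div_le (m := m) (n := 2) (α := ℝ)]
  have hlog_half : log m / 2 ≤ log ((m / 2 : ℕ) + 2) := by
    have hm2 : (m : ℝ) / 2 ≤ (m / 2 : ℕ) + 2 := by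
      have : m ≤ 2 * (m / 2) + 1 := by omega
      have : (m : ℝ) ≤ 2 * (m / 2 : ℕ) + 1 := by exact_mod_cast this
      linarith
    have h2 : 2 * log 2 ≤ log m := log_four_eq_two_mul_log_two ▸ log_le_log (by norm_num) hm4
    have := log_le_log (by positivity) hm2
    rw [log_div (by positivity) (by norm_num)] at this
    linarith
  have hloglog : log (log m) - log 2 ≤ log (log ((m / 2 : ℕ) + 2)) := by
    have hlogm : 0 < log (m : ℝ) := log_pos (by linarith)
    have := log_le_log (by positivity) hlog_half
    rwa [log_div hlogm.ne' (by norm_num)] at this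
  have h10 : log 10 = log 2 + log 5 := by rw [← log_mul (by norm_num) (by norm_num)]; norm_num
  calc m / 2 * (log (log m) - log 10)
      ≤ ((m - m / 2 : ℕ) : ℝ) * (log (log m) - log 2 - log 5) := by
        rw [h10, ← sub_sub]; gcongr; linarith
    _ ≤ ((m - m / 2 : ℕ) : ℝ) * (log (log ((m / 2 : ℕ) + 2)) - log 5) := by gcongr
    _ ≤ _ := by exact_mod_cast sub_mul_le_log_prodFirstPrimes_sub_log_factorial (m / 2) m

lemma eventually_affine_add_mul_log_log_le (c₀ c₁ : ℝ) :
    ∀ᶠ u : ℝ in atTop, c₀ + c₁ * u + u / 8 * log (log u) ≤ u / 2 * (log (log u) - log 10) := by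
  have h : Tendsto (fun u => u * (3 / 8 * log (log u) + (-(log 10 / 2) - c₁))) atTop atTop :=
    tendsto_id.atTop_mul_atTop₀ <| tendsto_atTop_add_const_right _ _ <|
      (tendsto_log_atTop.comp tendsto_log_atTop).const_mul_atTop (by norm_num)
  filter_upwards [h.eventually_ge_atTop c₀] with u hu
  linarith

lemma eventually_add_log_factorial_le_log_prodFirstPrimes (c₀ c₁ : ℝ) :
    ∀ᶠ m : ℕ in atTop, c₀ + c₁ * m + log m.factorial + m / 8 * log (log m)
      ≤ log (prodFirstPrimes m) := by
  filter_upwards [eventually_ge_atTop 4,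
    tendsto_natCast_atTop_atTop.eventually (eventually_affine_add_mul_log_log_le c₀ c₁)]
    with m hm hreal
  linarith [half_mul_le_log_prodFirstPrimes_sub_log_factorial hm]

lemma eventually_div_log_le_primeCounting :
    ∀ᶠ L : ℝ in atTop, L / (4 * log L) ≤ Nat.primeCounting ⌊L / log 4⌋₊ := by
  have hlog4 := log_four_eq_two_mul_log_two
  have hlog2 : 1 / 2 < log 2 := by linarith [log_two_gt_d9]
  have hx : Tendsto (fun L => L / log 4) atTop atTop := tendsto_id.atTop_div_const (by linarith)
  have hsmall := isLittleO_log_id_atTop.bound (c := log 2 / 4) (by positivity)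
  filter_upwards [hx.eventually_ge_atTop 6,
    (tendsto_atTop_add_const_right _ 2 hx).eventually hsmall] with L hx6 hlog
  set x := L / log 4
  simp only [norm_eq_abs, id, abs_of_pos (by linarith : 0 < x + 2)] at hlog
  have hL : L = 2 * log 2 * x := by rw [← hlog4, mul_div_cancel₀ _ (by linarith)]
  have hxL : x ≤ L := by rw [hL]; nlinarith
  refine le_trans ?_ (Chebyshev.pi_ge' (by linarith))
  rw [← div_div]
  refine div_le_div₀ ?_ ?_ (log_pos (by linarith)) (log_le_log (by linarith) hxL) <;>
    nlinarith [le_abs_self (log (x + 2))]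

lemma eventually_log_div_le_maxPrimeFactorsCard :
    ∀ᶠ n : ℕ in atTop, log n / (4 * log (log n)) ≤ maxPrimeFactorsCard n := by
  filter_upwards [eventually_ge_atTop 1, (tendsto_log_atTop.comp
    tendsto_natCast_atTop_atTop).eventually eventually_div_log_le_primeCounting] with n hn h
  refine h.trans ?_
  rw [Function.comp_apply, log_div_log, show (4 : ℝ) = (4 : ℕ) by norm_num, natFloor_logb_natCast]
  exact_mod_cast primeCounting_le_maxPrimeFactorsCard
    ((primorial_le_four_pow _).trans (Nat.pow_log_le_self 4 (by omega)))

lemma eventually_mul_log_log_div_le_of_div_log_le :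
    ∀ᶠ L : ℝ in atTop, ∀ M : ℝ, L / (4 * log L) ≤ M →
      L * log (log L) / (64 * log L) ≤ M / 8 * log (log M) := by
  have hsmall := isLittleO_log_id_atTop.bound (c := 1 / 4) (by norm_num)
  filter_upwards [eventually_gt_atTop 0, tendsto_log_atTop.eventually_ge_atTop (4 * log 4),
    tendsto_log_atTop.eventually hsmall,
    (tendsto_log_atTop.comp tendsto_log_atTop).eventually_ge_atTop (2 * log 2)]
    with L hL hℓ4 hsmallℓ hlll M hM
  set ℓ := log L
  simp only [Function.comp_apply, norm_eq_abs, id] at hsmallℓ hlll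
  have hlog4 : 0 < log 4 := log_pos (by norm_num)
  have hℓ : 0 < ℓ := by linarith
  rw [abs_of_pos hℓ] at hsmallℓ
  have hlog2 : 0 < log 2 := log_pos (by norm_num)
  set u := L / (4 * ℓ)
  have hu : 0 < u := by positivity
  have hlogu : ℓ / 2 ≤ log u := by
    rw [log_div hL.ne' (by positivity), log_mul (by norm_num) hℓ.ne']
    linarith [le_abs_self (log ℓ)]
  have hlogM : ℓ / 2 ≤ log M := hlogu.trans (log_le_log hu hM)
  have hloglogM : log ℓ / 2 ≤ log (log M) := by
    have := log_le_log (by positivity) hlogM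
    rw [log_div hℓ.ne' (by norm_num)] at this
    linarith
  calc L * log ℓ / (64 * ℓ) = u / 8 * (log ℓ / 2) := by simp only [u]; field_simp; ring
    _ ≤ M / 8 * log (log M) := mul_le_mul (by linarith) hloglogM (by linarith) (by linarith)

/-- If `|χ̃(Δ_n)| ≤ D · C^{d_n} · (d_n + 1)!` for constants `C, D > 0`, then
`χ̃(Δ_n) = O(n · exp(-A · log n · log log log n / log log n))` for some `A > 0`. -/
theorem stmt19 (C D : ℝ) (hC : 0 < C) (hD : 0 < D)
    (hyp : ∀ n : ℕ, 2 ≤ n →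
      |(chiDelta n : ℝ)| ≤ D * C ^ dimDelta n * ((dimDelta n + 1).factorial : ℝ)) :
    ∃ A : ℝ, 0 < A ∧
      (fun n : ℕ => (chiDelta n : ℝ))
        =O[atTop] fun n : ℕ =>
          (n : ℝ) * Real.exp (-A * (Real.log n * Real.log (Real.log (Real.log n)))
            / Real.log (Real.log n)) := by
  set C' := max C 1
  refine ⟨1 / 64, by norm_num, Asymptotics.IsBigO.of_bound 1 ?_⟩
  filter_upwards [eventually_ge_atTop 2, tendsto_maxPrimeFactorsCard_atTop.eventually
      (eventually_add_log_factorial_le_log_prodFirstPrimes (log D) (log C')),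
    eventually_log_div_le_maxPrimeFactorsCard,
    (tendsto_log_atTop.comp tendsto_natCast_atTop_atTop).eventually
      eventually_mul_log_log_div_le_of_div_log_le]
    with n hn hprod hm hlll
  simp only [Function.comp_apply] at hlll
  set m := maxPrimeFactorsCard n
  have hn0 : (0 : ℝ) < n := by positivity
  have hdim : dimDelta n + 1 = m := dimDelta_add_one hn
  have hbound : |(chiDelta n : ℝ)| ≤ D * C' ^ m * m.factorial := by
    refine (hyp n hn).trans ?_
    have hpow : C ^ dimDelta n ≤ C' ^ m :=
      (pow_le_pow_left₀ hC.le (le_max_left C 1) _).trans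
        (pow_le_pow_right₀ (le_max_right C 1) (by omega))
    rw [hdim]
    gcongr
  have hlog : log (D * C' ^ m * m.factorial) = log D + log C' * m + log m.factorial := by
    rw [log_mul (by positivity) (by positivity), log_mul hD.ne' (by positivity), log_pow]
    ring
  have hprod_le : log (prodFirstPrimes m) ≤ log n :=
    log_le_log (by exact_mod_cast prodFirstPrimes_pos m)
      (by exact_mod_cast prodFirstPrimes_maxPrimeFactorsCard_le (by omega))
  rw [norm_mul, norm_of_nonneg hn0.le, norm_of_nonneg (exp_nonneg _), one_mul, norm_eq_abs]
  calc |(chiDelta n : ℝ)| ≤ exp (log (D * C' ^ m * m.factorial)) := by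
        rwa [exp_log (by positivity)]
    _ ≤ exp (log n - log n * log (log (log n)) / (64 * log (log n))) := by
        rw [hlog]; gcongr; linarith [hlll m hm]
    _ = n * exp (-(1 / 64) * (log n * log (log (log n))) / log (log n)) := by
        rw [sub_eq_add_neg, exp_add, exp_log hn0]; ring_nf
end
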